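/- arXiv:2406.02825 — 5 statements merged into one kernel-verified Lean document; each statement's English description precedes it below -/
import Mathlib

section
/- For any symmetric generating set S of ℤ^n not containing 0, the edge chromatic number of the Cayley graph C(ℤ^n, S) equals |S|. -/
/-- A proper edge coloring: distinct edges of `G` sharing a vertex get distinct colors. -/
def properEdgeColoring {V : Type*} {γ : Type*} (G : SimpleGraph V) (c : Sym2 V → γ) : Prop :=
  ∀ e ∈ G.edgeSet, ∀ f ∈ G.edgeSet, e ≠ f → (∃ v, v ∈ e ∧ v ∈ f) → c e ≠ c f

/-- The Cayley graph of ℤ^n with generating set `S`: edges between `x` and `y` iff `y - x ∈ S`. -/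
def cayleyGraph (n : ℕ) (S : Finset (Fin n → ℤ)) : SimpleGraph (Fin n → ℤ) :=
  SimpleGraph.fromRel (fun x y => y - x ∈ S)

noncomputable def idx {n : ℕ} (s : Fin n → ℤ) (h : s ≠ 0) : Fin n :=
  (Finset.univ.filter (fun i => s i ≠ 0)).min' (by
    obtain ⟨i, hi⟩ := Function.ne_iff.mp h
    exact ⟨i, by simpa using hi⟩)

lemma idx_spec {n : ℕ} (s : Fin n → ℤ) (h : s ≠ 0) : s (idx s h) ≠ 0 := by
  have := Finset.min'_mem (Finset.univ.filter (fun i => s i ≠ 0)) (by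
    obtain ⟨i, hi⟩ := Function.ne_iff.mp h
    exact ⟨i, by simpa using hi⟩)
  simpa [idx] using this

lemma idx_neg {n : ℕ} (s : Fin n → ℤ) (h : s ≠ 0) (h' : -s ≠ 0) :
    idx (-s) h' = idx s h := by
  unfold idx
  congr 1
  ext i
  simp

noncomputable def col {n : ℕ} (x y : Fin n → ℤ) : Fin n → ℤ :=
  if h : y - x = 0 then 0 else
    if 0 < (y - x) (idx (y - x) h) then
      if Even (x (idx (y - x) h) / (y - x) (idx (y - x) h)) then y - x else x - y
    else
      if Even (y (idx (y - x) h) / (x - y) (idx (y - x) h)) then x - y else y - x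

lemma idx_congr {n : ℕ} (s s' : Fin n → ℤ) (h : s ≠ 0) (h' : s' ≠ 0) (heq : s = s') :
    idx s h = idx s' h' := by subst heq; rfl

lemma col_comm {n : ℕ} (x y : Fin n → ℤ) : col x y = col y x := by
  by_cases hxy : y - x = 0
  · have hyx : x - y = 0 := by rw [← neg_sub y x, hxy]; simp
    simp [col, hxy, hyx]
  · have hyx : x - y ≠ 0 := fun hh => hxy (by rw [← neg_sub x y, hh]; simp)
    rw [col, col, dif_neg hxy, dif_neg hyx]
    have hi : idx (x - y) hyx = idx (y - x) hxy := by
      refine (idx_congr _ (-(y-x)) _ (neg_ne_zero.mpr hxy) (by ring)).trans (idx_neg _ _ _)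
    rw [hi]
    set i := idx (y - x) hxy with hidef
    have hne : (y - x) i ≠ 0 := idx_spec _ _
    have hxyi : (x - y) i = -((y - x) i) := by simp
    by_cases hpos : 0 < (y - x) i
    · have hnpos : ¬ 0 < (x - y) i := by rw [hxyi]; omega
      rw [if_pos hpos, if_neg hnpos]
    · have hlt : (y - x) i < 0 := by omega
      have hpos' : 0 < (x - y) i := by rw [hxyi]; omega
      rw [if_neg hpos, if_pos hpos']

lemma col_mem_pair {n : ℕ} {x y : Fin n → ℤ} (h : y - x ≠ 0) :
    col x y = y - x ∨ col x y = x - y := by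
  rw [col, dif_neg h]
  split_ifs <;> simp

lemma col_ne {n : ℕ} (v t : Fin n → ℤ) (h : t ≠ 0) :
    col v (v + t) ≠ col v (v - t) := by
  have hnt : -t ≠ 0 := neg_ne_zero.mpr h
  have e1 : (v + t) - v = t := by ring
  have e2 : v - (v + t) = -t := by ring
  have e3 : (v - t) - v = -t := by ring
  have e4 : v - (v - t) = t := by ring
  have hc1 : col v (v + t) =
      if 0 < t (idx t h) then
        (if Even (v (idx t h) / t (idx t h)) then t else -t)
      else
        (if Even ((v + t) (idx t h) / (-t) (idx t h)) then -t else t) := by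
    rw [col]
    simp only [e1, e2]
    rw [dif_neg h]
  have hc2 : col v (v - t) =
      if 0 < (-t) (idx t h) then
        (if Even (v (idx t h) / (-t) (idx t h)) then -t else t)
      else
        (if Even ((v - t) (idx t h) / t (idx t h)) then t else -t) := by
    rw [col]
    simp only [e3, e4]
    rw [dif_neg hnt, idx_neg t h hnt]
  set i := idx t h with hidef
  have hi : t i ≠ 0 := idx_spec _ _
  have htne : t ≠ -t := by
    intro heq
    have := congrFun heq i
    simp only [Pi.neg_apply] at this
    omega
  rw [hc1, hc2]
  by_cases hpos : 0 < t i
  · have hn : ¬ 0 < (-t) i := by simp only [Pi.neg_apply]; omega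
    rw [if_pos hpos, if_neg hn]
    have hpar : (v - t) i / t i = v i / t i - 1 := by
      have := Int.add_mul_ediv_right (v i) (-1) hi
      simp only [Pi.sub_apply]
      rw [show v i - t i = v i + (-1) * t i by ring, this]; ring
    rw [hpar]
    by_cases hE : Even (v i / t i)
    · rw [if_pos hE, if_neg (by simpa [Int.even_sub_one] using hE)]
      exact htne
    · rw [if_neg hE, if_pos (by simpa [Int.even_sub_one] using hE)]
      exact fun hh => htne hh.symm
  · have hlt : t i < 0 := by omega
    have hp : 0 < (-t) i := by simp only [Pi.neg_apply]; omega
    rw [if_neg hpos, if_pos hp]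
    have hpar : (v + t) i / (-t) i = v i / (-t) i - 1 := by
      have hnti : (-t) i ≠ 0 := by simp only [Pi.neg_apply]; omega
      have := Int.add_mul_ediv_right (v i) (-1) hnti
      simp only [Pi.add_apply, Pi.neg_apply] at *
      rw [show v i + t i = v i + (-1) * -(t i) by ring, this]; ring
    rw [hpar]
    by_cases hE : Even (v i / (-t) i)
    · rw [if_pos hE, if_neg (by simpa [Int.even_sub_one] using hE)]
      exact htne
    · rw [if_neg hE, if_pos (by simpa [Int.even_sub_one] using hE)]
      exact fun hh => htne hh.symm

/-- For any symmetric generating set `S` of ℤ^n not containing `0`, the edge chromatic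
number of the Cayley graph `C(ℤ^n, S)` equals `|S|`. -/
theorem edgeChromatic_cayley (n : ℕ) (hn : 1 ≤ n) (S : Finset (Fin n → ℤ))
    (hsym : ∀ s ∈ S, -s ∈ S) (h0 : (0 : Fin n → ℤ) ∉ S)
    (hgen : AddSubgroup.closure (S : Set (Fin n → ℤ)) = ⊤) :
    IsLeast {m : ℕ | ∃ c : Sym2 (Fin n → ℤ) → Fin m,
      properEdgeColoring (cayleyGraph n S) c} S.card := by
  classical
  have hSne : S.Nonempty := by
    by_contra hne
    rw [Finset.not_nonempty_iff_eq_empty] at hne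
    subst hne
    simp only [Finset.coe_empty, AddSubgroup.closure_empty] at hgen
    have hmem : (fun _ => (1:ℤ) : Fin n → ℤ) ∈ (⊥ : AddSubgroup (Fin n → ℤ)) := by
      rw [hgen]; trivial
    rw [AddSubgroup.mem_bot] at hmem
    have := congrFun hmem ⟨0, hn⟩
    simp at this
  have hcard : 0 < S.card := Finset.card_pos.mpr hSne
  constructor
  · -- membership: construct a coloring with S.card colors
    set F : (Fin n → ℤ) → Fin S.card :=
      fun w => if h : w ∈ S then S.equivFin ⟨w, h⟩ else ⟨0, hcard⟩ with hF
    refine ⟨fun e => F (Sym2.lift ⟨col, col_comm⟩ e), ?_⟩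
    intro e he f hf hef hshare
    obtain ⟨v, hve, hvf⟩ := hshare
    obtain ⟨a, rfl⟩ := Sym2.mem_iff_exists.mp hve
    obtain ⟨b, rfl⟩ := Sym2.mem_iff_exists.mp hvf
    rw [SimpleGraph.mem_edgeSet] at he hf
    rw [cayleyGraph, SimpleGraph.fromRel_adj] at he hf
    obtain ⟨hva, hra⟩ := he
    obtain ⟨hvb, hrb⟩ := hf
    have haS : a - v ∈ S := by
      rcases hra with h | h
      · exact h
      · have := hsym _ h; rwa [neg_sub] at this
    have hbS : b - v ∈ S := by
      rcases hrb with h | h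
      · exact h
      · have := hsym _ h; rwa [neg_sub] at this
    have ha0 : a - v ≠ 0 := sub_ne_zero.mpr (Ne.symm hva)
    have hb0 : b - v ≠ 0 := sub_ne_zero.mpr (Ne.symm hvb)
    have hab : a ≠ b := fun hh => hef (by rw [hh])
    have hcolaS : col v a ∈ S := by
      rcases col_mem_pair ha0 with h | h
      · rw [h]; exact haS
      · rw [h, show v - a = -(a - v) by ring]; exact hsym _ haS
    have hcolbS : col v b ∈ S := by
      rcases col_mem_pair hb0 with h | h
      · rw [h]; exact hbS
      · rw [h, show v - b = -(b - v) by ring]; exact hsym _ hbS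
    simp only [Sym2.lift_mk]
    intro heq
    have hcol : col v a = col v b := by
      rw [hF] at heq
      simp only [dif_pos hcolaS, dif_pos hcolbS] at heq
      have := S.equivFin.injective heq
      exact Subtype.ext_iff.mp this
    -- derive contradiction
    have hkey : b = v - (a - v) := by
      rcases col_mem_pair ha0 with h1 | h1 <;> rcases col_mem_pair hb0 with h2 | h2 <;>
          rw [h1, h2] at hcol
      · exact absurd (show a = b by linear_combination hcol) hab
      · linear_combination hcol
      · linear_combination -hcol
      · exact absurd (show a = b by linear_combination -hcol) hab
    have hca : col v (v + (a - v)) = col v a := by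
      congr 1; ring
    have hcb : col v (v - (a - v)) = col v b := by
      congr 1; rw [hkey]
    exact col_ne v (a - v) ha0 (by rw [hca, hcb, hcol])
  · -- lower bound
    intro m hm
    obtain ⟨c, hc⟩ := hm
    set φ : {x // x ∈ S} → Fin m := fun s => c s((0 : Fin n → ℤ), (s : Fin n → ℤ)) with hφ
    have hinj : Function.Injective φ := by
      intro s s' heq
      by_contra hne
      have hne' : (s : Fin n → ℤ) ≠ (s' : Fin n → ℤ) := fun hh => hne (Subtype.ext hh)
      have hs0 : (s : Fin n → ℤ) ≠ 0 := fun hh => h0 (hh ▸ s.2)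
      have hs0' : (s' : Fin n → ℤ) ≠ 0 := fun hh => h0 (hh ▸ s'.2)
      refine hc s((0 : Fin n → ℤ), (s : Fin n → ℤ)) ?_ s((0 : Fin n → ℤ), (s' : Fin n → ℤ)) ?_ ?_ ?_ heq
      · rw [SimpleGraph.mem_edgeSet, cayleyGraph, SimpleGraph.fromRel_adj]
        exact ⟨fun hh => hs0 hh.symm, Or.inl (by simpa using s.2)⟩
      · rw [SimpleGraph.mem_edgeSet, cayleyGraph, SimpleGraph.fromRel_adj]
        exact ⟨fun hh => hs0' hh.symm, Or.inl (by simpa using s'.2)⟩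
      · intro hh
        rw [Sym2.eq_iff] at hh
        rcases hh with ⟨-, h2⟩ | ⟨h1, -⟩
        · exact hne' h2
        · exact hs0' h1.symm
      · exact ⟨0, Sym2.mem_mk_left _ _, Sym2.mem_mk_left _ _⟩
    calc S.card = Fintype.card {x // x ∈ S} := (Fintype.card_coe S).symm
      _ ≤ Fintype.card (Fin m) := Fintype.card_le_of_injective φ hinj
      _ = m := Fintype.card_fin m
end

section
/- For every n ≥ 1 and every n-dimensional rectangle R = [0,a_1] × ... × [0,a_n] in ℤ^n with all a_i ≥ 1, there is a proper edge (2n+1)-coloring of the edges lying in R together with the edges adjacent to R, such that for each 1 ≤ i ≤ n, all edges adjacent to R (i.e., outside R but sharing a vertex with R) and parallel to e_i receive the same fixed color c_i. -/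
/-- An edge of the grid graph on ℤ^n, recorded as its left endpoint together with the
direction `i`; the edge joins `e.1` and `e.1 + e_i`. -/
abbrev GridEdge (n : ℕ) := (Fin n → ℤ) × Fin n

/-- The right endpoint `e.1 + e_i` of a grid edge. -/
def rightEnd {n : ℕ} (e : GridEdge n) : Fin n → ℤ := e.1 + Pi.single e.2 1

/-- Two grid edges share a vertex. -/
def sharesVertex {n : ℕ} (e f : GridEdge n) : Prop :=
  e.1 = f.1 ∨ e.1 = rightEnd f ∨ rightEnd e = f.1 ∨ rightEnd e = rightEnd f

/-- `x` is a vertex of the rectangle `[b_1, b_1+a_1] × ⋯ × [b_n, b_n+a_n]`. -/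
def inRect {n : ℕ} (b : Fin n → ℤ) (a : Fin n → ℕ) (x : Fin n → ℤ) : Prop :=
  ∀ i, b i ≤ x i ∧ x i ≤ b i + (a i : ℤ)

/-- The grid edge `e` lies in the rectangle: both endpoints are in it. -/
def edgeIn {n : ℕ} (b : Fin n → ℤ) (a : Fin n → ℕ) (e : GridEdge n) : Prop :=
  inRect b a e.1 ∧ inRect b a (rightEnd e)

/-- The grid edge `e` is adjacent to the rectangle: not in it, but shares a vertex with it. -/
def edgeAdj {n : ℕ} (b : Fin n → ℤ) (a : Fin n → ℕ) (e : GridEdge n) : Prop :=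
  ¬ edgeIn b a e ∧ (inRect b a e.1 ∨ inRect b a (rightEnd e))

/- ======================= auxiliary constructions ======================= -/

/-- Index at cyclic offset `t` from `i`. -/
def slabIdx {n : ℕ} (i : Fin n) (t : ℕ) : Fin n :=
  ⟨(i.val + t) % n, Nat.mod_lt _ i.pos⟩

/-- A direction from which the slab edge in direction `i` can borrow a color. -/
def borrowable {n : ℕ} (a : Fin n → ℕ) (x : Fin n → ℤ) (i : Fin n) (t : ℕ) : Prop :=
  1 ≤ t ∧ t < n ∧ a (slabIdx i t) % 2 = 0 ∧ (x (slabIdx i t) = 0 ∨ x (slabIdx i t) = 1)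

instance {n : ℕ} (a : Fin n → ℕ) (x : Fin n → ℤ) (i : Fin n) (t : ℕ) :
    Decidable (borrowable a x i t) := by
  unfold borrowable; infer_instance

instance {n : ℕ} (a : Fin n → ℕ) (x : Fin n → ℤ) (i : Fin n) :
    Decidable (∃ t, borrowable a x i t) :=
  decidable_of_iff (∃ t ∈ Finset.range n, borrowable a x i t)
    ⟨fun ⟨t, _, h⟩ => ⟨t, h⟩, fun ⟨t, h⟩ => ⟨t, Finset.mem_range.mpr h.2.1, h⟩⟩

/-- The edge coloring. -/
def ecol {n : ℕ} (a : Fin n → ℕ) (e : GridEdge n) : ℕ :=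
  if e.1 e.2 < 0 ∨ (a e.2 : ℤ) ≤ e.1 e.2 then 2 * e.2.val
  else if a e.2 % 2 = 1 then (if e.1 e.2 % 2 = 0 then 2 * e.2.val + 1 else 2 * e.2.val)
  else if 1 ≤ e.1 e.2 then (if e.1 e.2 % 2 = 1 then 2 * e.2.val + 1 else 2 * e.2.val)
  else if h : ∃ t, borrowable a e.1 e.2 t then
    (if e.1 (slabIdx e.2 (Nat.find h)) = 0 then 2 * (slabIdx e.2 (Nat.find h)).val + 1
     else 2 * (slabIdx e.2 (Nat.find h)).val)
  else 2 * n

lemma ecol_def {n : ℕ} (a : Fin n → ℕ) (x : Fin n → ℤ) (i : Fin n) :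
    ecol a (x, i) =
      (if x i < 0 ∨ (a i : ℤ) ≤ x i then 2 * i.val
       else if a i % 2 = 1 then (if x i % 2 = 0 then 2 * i.val + 1 else 2 * i.val)
       else if 1 ≤ x i then (if x i % 2 = 1 then 2 * i.val + 1 else 2 * i.val)
       else if h : ∃ t, borrowable a x i t then
         (if x (slabIdx i (Nat.find h)) = 0 then 2 * (slabIdx i (Nat.find h)).val + 1
          else 2 * (slabIdx i (Nat.find h)).val)
       else 2 * n) := rfl

lemma mod_compute {p n : ℕ} (h : p < 2 * n) : p % n = p ∨ p % n + n = p := by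
  rcases Nat.lt_or_ge p n with h1 | h1
  · exact Or.inl (Nat.mod_eq_of_lt h1)
  · right
    rw [Nat.mod_eq_sub_mod h1, Nat.mod_eq_of_lt (by omega)]
    omega

lemma slabIdx_ne {n : ℕ} (i : Fin n) {t : ℕ} (h1 : 1 ≤ t) (h2 : t < n) : slabIdx i t ≠ i := by
  intro h
  have hv : (i.val + t) % n = i.val := congrArg Fin.val h
  have hi := i.isLt
  have := mod_compute (p := i.val + t) (n := n) (by omega)
  omega

lemma offset_exists {n : ℕ} {i j : Fin n} (h : i ≠ j) :
    ∃ d, 1 ≤ d ∧ d < n ∧ slabIdx i d = j ∧ slabIdx j (n - d) = i := by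
  have hi := i.isLt; have hj := j.isLt
  have hne : i.val ≠ j.val := fun hv => h (Fin.ext hv)
  rcases Nat.lt_or_ge i.val j.val with hlt | hge
  · refine ⟨j.val - i.val, by omega, by omega, Fin.ext ?_, Fin.ext ?_⟩
    · show (i.val + (j.val - i.val)) % n = j.val
      rw [show i.val + (j.val - i.val) = j.val by omega, Nat.mod_eq_of_lt hj]
    · show (j.val + (n - (j.val - i.val))) % n = i.val
      rw [show j.val + (n - (j.val - i.val)) = n + i.val by omega, Nat.add_mod_left,
        Nat.mod_eq_of_lt hi]
  · have hgt : j.val < i.val := by omega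
    refine ⟨n + j.val - i.val, by omega, by omega, Fin.ext ?_, Fin.ext ?_⟩
    · show (i.val + (n + j.val - i.val)) % n = j.val
      rw [show i.val + (n + j.val - i.val) = n + j.val by omega, Nat.add_mod_left,
        Nat.mod_eq_of_lt hj]
    · show (j.val + (n - (n + j.val - i.val))) % n = i.val
      rw [show j.val + (n - (n + j.val - i.val)) = i.val by omega, Nat.mod_eq_of_lt hi]

lemma ecol_lt {n : ℕ} (a : Fin n → ℕ) (e : GridEdge n) : ecol a e < 2 * n + 1 := by
  obtain ⟨x, i⟩ := e
  have hi := i.isLt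
  rw [ecol_def]
  split_ifs <;> omega

lemma ecol_pend {n : ℕ} {a : Fin n → ℕ} {x : Fin n → ℤ} {i : Fin n}
    (h : x i < 0 ∨ (a i : ℤ) ≤ x i) : ecol a (x, i) = 2 * i.val := by
  rw [ecol_def, if_pos h]

lemma ecol_odd {n : ℕ} {a : Fin n → ℕ} {x : Fin n → ℤ} {i : Fin n}
    (h1 : 0 ≤ x i) (h2 : x i < (a i : ℤ)) (h3 : a i % 2 = 1) :
    ecol a (x, i) = if x i % 2 = 0 then 2 * i.val + 1 else 2 * i.val := by
  rw [ecol_def, if_neg (show ¬(x i < 0 ∨ (a i : ℤ) ≤ x i) by omega), if_pos h3]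

lemma ecol_even {n : ℕ} {a : Fin n → ℕ} {x : Fin n → ℤ} {i : Fin n}
    (h1 : 1 ≤ x i) (h2 : x i < (a i : ℤ)) (h3 : a i % 2 = 0) :
    ecol a (x, i) = if x i % 2 = 1 then 2 * i.val + 1 else 2 * i.val := by
  rw [ecol_def, if_neg (show ¬(x i < 0 ∨ (a i : ℤ) ≤ x i) by omega),
    if_neg (show ¬(a i % 2 = 1) by omega), if_pos h1]

lemma ecol_nonslab {n : ℕ} {a : Fin n → ℕ} {x : Fin n → ℤ} {i : Fin n}
    (h : x i < 0 ∨ (a i : ℤ) ≤ x i ∨ a i % 2 = 1 ∨ 1 ≤ x i) :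
    ecol a (x, i) = 2 * i.val ∨ ecol a (x, i) = 2 * i.val + 1 := by
  rw [ecol_def]
  split_ifs <;> omega

lemma ecol_slab_form {n : ℕ} {a : Fin n → ℕ} {x : Fin n → ℤ} {i : Fin n}
    (h1 : ¬(x i < 0 ∨ (a i : ℤ) ≤ x i)) (h2 : a i % 2 ≠ 1) (h3 : ¬ (1:ℤ) ≤ x i) :
    ecol a (x, i) = 2 * n ∨
      ∃ m : Fin n, m ≠ i ∧ a m % 2 = 0 ∧
        ((x m = 0 ∧ ecol a (x, i) = 2 * m.val + 1) ∨ (x m = 1 ∧ ecol a (x, i) = 2 * m.val)) := by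
  rw [ecol_def, if_neg h1, if_neg h2, if_neg h3]
  by_cases h : ∃ t, borrowable a x i t
  · right
    rw [dif_pos h]
    obtain ⟨ht1, ht2, hpar, hx01⟩ := Nat.find_spec h
    refine ⟨slabIdx i (Nat.find h), slabIdx_ne _ ht1 ht2, hpar, ?_⟩
    rcases hx01 with h0 | h1'
    · exact Or.inl ⟨h0, by rw [if_pos h0]⟩
    · exact Or.inr ⟨h1', by rw [if_neg (by omega)]⟩
  · left; rw [dif_neg h]

lemma slab_ne_slab {n : ℕ} {a : Fin n → ℕ} {x y : Fin n → ℤ} {i j : Fin n} (hij : i ≠ j)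
    (hxi : x i = 0) (hyj : y j = 0) (hai : a i % 2 = 0) (haj : a j % 2 = 0)
    (hxj : x j = 0 ∨ x j = 1) (hyi : y i = 0 ∨ y i = 1)
    (hposi : 1 ≤ a i) (hposj : 1 ≤ a j) :
    ecol a (x, i) ≠ ecol a (y, j) := by
  have hi := i.isLt; have hj := j.isLt
  obtain ⟨d, hd1, hd2, hdj, hdi⟩ := offset_exists hij
  have hbx : borrowable a x i d := ⟨hd1, hd2, by rw [hdj]; exact haj, by rw [hdj]; exact hxj⟩
  have hby : borrowable a y j (n - d) :=
    ⟨by omega, by omega, by rw [hdi]; exact hai, by rw [hdi]; exact hyi⟩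
  have hex : ∃ t, borrowable a x i t := ⟨d, hbx⟩
  have hey : ∃ t, borrowable a y j t := ⟨n - d, hby⟩
  have hxe : ecol a (x, i) =
      (if x (slabIdx i (Nat.find hex)) = 0 then 2 * (slabIdx i (Nat.find hex)).val + 1
       else 2 * (slabIdx i (Nat.find hex)).val) := by
    rw [ecol_def, if_neg (show ¬(x i < 0 ∨ (a i : ℤ) ≤ x i) by omega),
      if_neg (show ¬(a i % 2 = 1) by omega), if_neg (show ¬(1:ℤ) ≤ x i by omega), dif_pos hex]
  have hye : ecol a (y, j) =
      (if y (slabIdx j (Nat.find hey)) = 0 then 2 * (slabIdx j (Nat.find hey)).val + 1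
       else 2 * (slabIdx j (Nat.find hey)).val) := by
    rw [ecol_def, if_neg (show ¬(y j < 0 ∨ (a j : ℤ) ≤ y j) by omega),
      if_neg (show ¬(a j % 2 = 1) by omega), if_neg (show ¬(1:ℤ) ≤ y j by omega), dif_pos hey]
  intro hcol
  rw [hxe, hye] at hcol
  obtain ⟨hte1, hte2, -, -⟩ := Nat.find_spec hex
  obtain ⟨htf1, htf2, -, -⟩ := Nat.find_spec hey
  have hval : (slabIdx i (Nat.find hex)).val = (slabIdx j (Nat.find hey)).val := by
    split_ifs at hcol <;> omega
  have hmm : slabIdx i (Nat.find hex) = slabIdx j (Nat.find hey) := Fin.ext hval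
  have hle_e : Nat.find hex ≤ d := Nat.find_min' hex hbx
  have hle_f : Nat.find hey ≤ n - d := Nat.find_min' hey hby
  have hne_e : Nat.find hex ≠ d := by
    intro hh
    exact slabIdx_ne j htf1 htf2 (by rw [← hmm, hh, hdj])
  have hne_f : Nat.find hey ≠ n - d := by
    intro hh
    exact slabIdx_ne i hte1 hte2 (by rw [hmm, hh, hdi])
  have e1 : (i.val + Nat.find hex) % n = (j.val + Nat.find hey) % n := hval
  have e2 : (i.val + d) % n = j.val := congrArg Fin.val hdj
  have m1 := mod_compute (p := i.val + Nat.find hex) (n := n) (by omega)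
  have m2 := mod_compute (p := j.val + Nat.find hey) (n := n) (by omega)
  have m3 := mod_compute (p := i.val + d) (n := n) (by omega)
  omega

lemma slab_vs_nonslab {n : ℕ} {a : Fin n → ℕ} {x y : Fin n → ℤ} {i j : Fin n}
    (ha : ∀ k, 1 ≤ a k) (hij : i ≠ j)
    (hxj : x j = y j ∨ x j = y j + 1)
    (hxi : x i = 0) (hai : a i % 2 = 0)
    (hfns : y j < 0 ∨ (a j : ℤ) ≤ y j ∨ a j % 2 = 1 ∨ (1:ℤ) ≤ y j) :
    ecol a (x, i) ≠ ecol a (y, j) := by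
  have hi := i.isLt; have hj := j.isLt
  have hai1 := ha i
  rcases ecol_slab_form (a := a) (x := x) (i := i)
      (show ¬(x i < 0 ∨ (a i : ℤ) ≤ x i) by omega) (show a i % 2 ≠ 1 by omega)
      (show ¬(1:ℤ) ≤ x i by omega) with
    h2n | ⟨m, hmi, hme, ⟨hx0, hcol⟩ | ⟨hx1, hcol⟩⟩
  · rw [h2n]
    rcases ecol_nonslab hfns with h | h <;> rw [h] <;> omega
  · by_cases hmj : m = j
    · subst hmj
      have ham := ha m
      have hym : y m = -1 := by
        rcases hxj with h | h <;> rcases hfns with h' | h' | h' | h' <;> omega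
      rw [hcol, ecol_pend (x := y) (i := m) (Or.inl (show y m < 0 by omega))]
      omega
    · have hmjv : m.val ≠ j.val := fun hh => hmj (Fin.ext hh)
      rcases ecol_nonslab hfns with h | h <;> rw [hcol, h] <;> omega
  · by_cases hmj : m = j
    · subst hmj
      have ham := ha m
      have hym : y m = 1 := by
        rcases hxj with h | h <;> rcases hfns with h' | h' | h' | h' <;> omega
      rw [hcol, ecol_even (x := y) (i := m) (show (1:ℤ) ≤ y m by omega)
        (show y m < (a m : ℤ) by omega) hme, if_pos (show y m % 2 = 1 by omega)]
      omega
    · have hmjv : m.val ≠ j.val := fun hh => hmj (Fin.ext hh)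
      rcases ecol_nonslab hfns with h | h <;> rw [hcol, h] <;> omega

lemma cross_ne {n : ℕ} {a : Fin n → ℕ} (ha : ∀ k, 1 ≤ a k) {x y : Fin n → ℤ} {i j : Fin n}
    (hij : i ≠ j)
    (hxj : x j = y j ∨ x j = y j + 1) (hyi : y i = x i ∨ y i = x i + 1) :
    ecol a (x, i) ≠ ecol a (y, j) := by
  have hai := ha i; have haj := ha j
  by_cases hsx : x i = 0 ∧ a i % 2 = 0 <;> by_cases hsy : y j = 0 ∧ a j % 2 = 0
  · refine slab_ne_slab hij hsx.1 hsy.1 hsx.2 hsy.2 ?_ ?_ hai haj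
    · rcases hxj with h | h
      · left; omega
      · right; omega
    · rcases hyi with h | h
      · left; omega
      · right; omega
  · have hfns : y j < 0 ∨ (a j : ℤ) ≤ y j ∨ a j % 2 = 1 ∨ (1:ℤ) ≤ y j := by
      rcases not_and_or.mp hsy with h | h
      · have h' : y j ≠ 0 := h
        omega
      · have h' : a j % 2 ≠ 0 := h
        omega
    exact slab_vs_nonslab ha hij hxj hsx.1 hsx.2 hfns
  · have hens : x i < 0 ∨ (a i : ℤ) ≤ x i ∨ a i % 2 = 1 ∨ (1:ℤ) ≤ x i := by
      rcases not_and_or.mp hsx with h | h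
      · have h' : x i ≠ 0 := h
        omega
      · have h' : a i % 2 ≠ 0 := h
        omega
    exact (slab_vs_nonslab ha hij.symm hyi hsy.1 hsy.2 hens).symm
  · have hiv : i.val ≠ j.val := fun hh => hij (Fin.ext hh)
    have hens : x i < 0 ∨ (a i : ℤ) ≤ x i ∨ a i % 2 = 1 ∨ (1:ℤ) ≤ x i := by
      rcases not_and_or.mp hsx with h | h
      · have h' : x i ≠ 0 := h
        omega
      · have h' : a i % 2 ≠ 0 := h
        omega
    have hfns : y j < 0 ∨ (a j : ℤ) ≤ y j ∨ a j % 2 = 1 ∨ (1:ℤ) ≤ y j := by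
      rcases not_and_or.mp hsy with h | h
      · have h' : y j ≠ 0 := h
        omega
      · have h' : a j % 2 ≠ 0 := h
        omega
    rcases ecol_nonslab hens with h1 | h1 <;>
      rcases ecol_nonslab hfns with h2 | h2 <;>
      rw [h1, h2] <;> omega

lemma step_ne {n : ℕ} {a : Fin n → ℕ} (ha : ∀ k, 1 ≤ a k) {x y : Fin n → ℤ} {i : Fin n}
    (hx1 : -1 ≤ x i) (hy2 : y i ≤ (a i : ℤ)) (hyx : y i = x i + 1) :
    ecol a (x, i) ≠ ecol a (y, i) := by
  have hin := i.isLt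
  have hai := ha i
  by_cases hp : x i = -1
  · rw [ecol_pend (x := x) (i := i) (Or.inl (show x i < 0 by omega))]
    by_cases hodd : a i % 2 = 1
    · rw [ecol_odd (x := y) (i := i) (show (0:ℤ) ≤ y i by omega)
        (show y i < (a i : ℤ) by omega) hodd, if_pos (show y i % 2 = 0 by omega)]
      omega
    · rcases ecol_slab_form (a := a) (x := y) (i := i)
        (show ¬(y i < 0 ∨ (a i : ℤ) ≤ y i) by omega) hodd (show ¬(1:ℤ) ≤ y i by omega) with
        h | ⟨m, hmi, -, ⟨-, hcol⟩ | ⟨-, hcol⟩⟩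
      · rw [h]; omega
      · rw [hcol]; have hmv : m.val ≠ i.val := fun hh => hmi (Fin.ext hh); omega
      · rw [hcol]; have hmv : m.val ≠ i.val := fun hh => hmi (Fin.ext hh); omega
  · have hx0' : (0:ℤ) ≤ x i := by omega
    by_cases hodd : a i % 2 = 1
    · rw [ecol_odd (x := x) (i := i) (show (0:ℤ) ≤ x i by omega)
        (show x i < (a i : ℤ) by omega) hodd]
      by_cases hpy : (a i : ℤ) ≤ y i
      · rw [ecol_pend (x := y) (i := i) (Or.inr hpy), if_pos (show x i % 2 = 0 by omega)]
        omega
      · rw [ecol_odd (x := y) (i := i) (show (0:ℤ) ≤ y i by omega)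
          (show y i < (a i : ℤ) by omega) hodd]
        split_ifs <;> omega
    · have hev : a i % 2 = 0 := by omega
      have ha2 : 2 ≤ a i := by omega
      by_cases hx0 : x i = 0
      · rw [ecol_even (x := y) (i := i) (show (1:ℤ) ≤ y i by omega)
          (show y i < (a i : ℤ) by omega) hev, if_pos (show y i % 2 = 1 by omega)]
        rcases ecol_slab_form (a := a) (x := x) (i := i)
          (show ¬(x i < 0 ∨ (a i : ℤ) ≤ x i) by omega) (show a i % 2 ≠ 1 by omega)
          (show ¬(1:ℤ) ≤ x i by omega) with
          h | ⟨m, hmi, -, ⟨-, hcol⟩ | ⟨-, hcol⟩⟩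
        · rw [h]; omega
        · rw [hcol]; have hmv : m.val ≠ i.val := fun hh => hmi (Fin.ext hh); omega
        · rw [hcol]; have hmv : m.val ≠ i.val := fun hh => hmi (Fin.ext hh); omega
      · rw [ecol_even (x := x) (i := i) (show (1:ℤ) ≤ x i by omega)
          (show x i < (a i : ℤ) by omega) hev]
        by_cases hpy : (a i : ℤ) ≤ y i
        · rw [ecol_pend (x := y) (i := i) (Or.inr hpy), if_pos (show x i % 2 = 1 by omega)]
          omega
        · rw [ecol_even (x := y) (i := i) (show (1:ℤ) ≤ y i by omega)
            (show y i < (a i : ℤ) by omega) hev]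
          split_ifs <;> omega

lemma rightEnd_apply {n : ℕ} (e : GridEdge n) (k : Fin n) :
    rightEnd e k = e.1 k + if k = e.2 then 1 else 0 := by
  simp [rightEnd, Pi.single_apply]

lemma rel_bound {n : ℕ} {a : Fin n → ℕ} {e : GridEdge n}
    (h : edgeIn 0 a e ∨ edgeAdj 0 a e) : -1 ≤ e.1 e.2 ∧ e.1 e.2 ≤ (a e.2 : ℤ) := by
  rcases h with ⟨h1, -⟩ | ⟨-, h1 | h1⟩
  · have := h1 e.2; simp only [Pi.zero_apply, zero_add] at this; omega
  · have := h1 e.2; simp only [Pi.zero_apply, zero_add] at this; omega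
  · have := h1 e.2
    rw [rightEnd_apply] at this
    simp only [Pi.zero_apply, zero_add, if_pos rfl] at this
    omega

lemma adj_pend {n : ℕ} {a : Fin n → ℕ} {e : GridEdge n} (h : edgeAdj 0 a e) :
    e.1 e.2 < 0 ∨ (a e.2 : ℤ) ≤ e.1 e.2 := by
  obtain ⟨hni, hr⟩ := h
  by_contra hc
  push_neg at hc
  obtain ⟨hc1, hc2⟩ := hc
  apply hni
  have key : ∀ k, k ≠ e.2 → (0 ≤ e.1 k ∧ e.1 k ≤ (a k : ℤ)) := by
    intro k hk
    rcases hr with h1 | h1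
    · have := h1 k; simp only [Pi.zero_apply, zero_add] at this; exact this
    · have := h1 k
      rw [rightEnd_apply] at this
      simp only [Pi.zero_apply, zero_add, if_neg hk, add_zero] at this
      exact this
  constructor
  · intro k
    simp only [Pi.zero_apply, zero_add]
    by_cases hk : k = e.2
    · subst hk; exact ⟨by omega, by omega⟩
    · exact key k hk
  · intro k
    simp only [Pi.zero_apply, zero_add]
    rw [rightEnd_apply]
    by_cases hk : k = e.2
    · rw [if_pos hk]; subst hk; constructor <;> omega
    · rw [if_neg hk, add_zero]; exact key k hk

/-- For every `n ≥ 1` and every n-dimensional rectangle `R = [0,a_1] × ⋯ × [0,a_n]` with all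
`a_i ≥ 1`, there is a proper edge `(2n+1)`-coloring of the edges in `R` together with the
edges adjacent to `R`, such that for each `i` all edges adjacent to `R` parallel to `e_i`
receive the same fixed color `c_i`. -/
theorem rect_boundary_coloring (n : ℕ) (hn : 1 ≤ n) (a : Fin n → ℕ) (ha : ∀ i, 1 ≤ a i) :
    ∃ (c : GridEdge n → Fin (2 * n + 1)) (col : Fin n → Fin (2 * n + 1)),
      (∀ e f : GridEdge n,
        (edgeIn 0 a e ∨ edgeAdj 0 a e) → (edgeIn 0 a f ∨ edgeAdj 0 a f) →
        e ≠ f → sharesVertex e f → c e ≠ c f) ∧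
      (∀ e : GridEdge n, edgeAdj 0 a e → c e = col e.2) := by
  refine ⟨fun e => ⟨ecol a e, ecol_lt a e⟩, fun i => ⟨2 * i.val, by have := i.isLt; omega⟩,
    ?_, ?_⟩
  · rintro ⟨x, i⟩ ⟨y, j⟩ he hf hne hsv
    intro hcf
    have hcv : ecol a (x, i) = ecol a (y, j) := congrArg Fin.val hcf
    have hsv' : x = y ∨ x = y + Pi.single j 1 ∨ x + Pi.single i 1 = y ∨
        x + Pi.single i 1 = y + Pi.single j 1 := hsv
    by_cases hij : i = j
    · subst hij
      rcases hsv' with h | h | h | h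
      · exact hne (by rw [h])
      · have hxy : x i = y i + 1 := by
          have h' := congrFun h i
          simp only [Pi.add_apply, Pi.single_eq_same] at h'
          omega
        exact (step_ne ha (rel_bound hf).1 (rel_bound he).2 hxy) hcv.symm
      · have hxy : y i = x i + 1 := by
          have h' := congrFun h i
          simp only [Pi.add_apply, Pi.single_eq_same] at h'
          omega
        exact (step_ne ha (rel_bound he).1 (rel_bound hf).2 hxy) hcv
      · have hxy : x = y := add_right_cancel h
        exact hne (by rw [hxy])
    · have key : ecol a (x, i) ≠ ecol a (y, j) := by
        rcases hsv' with h | h | h | h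
        · have hj' : x j = y j := congrFun h j
          have hi' : x i = y i := congrFun h i
          exact cross_ne ha hij (Or.inl hj') (Or.inl hi'.symm)
        · have hj' := congrFun h j
          have hi' := congrFun h i
          simp only [Pi.add_apply, Pi.single_eq_same, Pi.single_eq_of_ne hij, add_zero] at hj' hi'
          refine cross_ne ha hij ?_ ?_
          · right; omega
          · left; omega
        · have hj' := congrFun h j
          have hi' := congrFun h i
          simp only [Pi.add_apply, Pi.single_eq_same, Pi.single_eq_of_ne (Ne.symm hij),
            add_zero] at hj' hi'
          refine cross_ne ha hij ?_ ?_
          · left; omega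
          · right; omega
        · have hj' := congrFun h j
          have hi' := congrFun h i
          simp only [Pi.add_apply, Pi.single_eq_same, Pi.single_eq_of_ne hij,
            Pi.single_eq_of_ne (Ne.symm hij), add_zero] at hj' hi'
          refine cross_ne ha hij ?_ ?_
          · right; omega
          · right; omega
      exact key hcv
  · rintro ⟨x, i⟩ he
    exact Fin.ext (ecol_pend (adj_pend he))
end

section
/- Let R = [0,a_1] × ... × [0,a_n] be an n-dimensional rectangle in ℤ^n with all a_i ≥ 1, and suppose some a_i is odd. Then there is a proper edge 2n-coloring of the edges in R together with the edges adjacent to R, such that for each 1 ≤ i ≤ n, all edges adjacent to R and parallel to e_i receive the same fixed color c_i. -/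
-- ===== auxiliary development =====

namespace RectColor

variable {n : ℕ}

/-- The embedding of direction/bit pairs into `Fin (2*n)`. -/
def emb (n : ℕ) (p : Fin n × Bool) : Fin (2 * n) :=
  ⟨2 * p.1.val + (if p.2 then 1 else 0), by
    have := p.1.isLt; split <;> omega⟩

lemma emb_inj (n : ℕ) : Function.Injective (emb n) := by
  rintro ⟨i, b⟩ ⟨k, c⟩ h
  simp only [emb, Fin.mk.injEq] at h
  have h1 : i.val = k.val ∧ b = c := by
    rcases b <;> rcases c <;> simp_all <;> omega
  exact Prod.ext (Fin.ext h1.1) h1.2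

/-- The "reduced" coordinate of an edge in its own direction. -/
def qv (a : Fin n → ℕ) (e : GridEdge n) : ℤ :=
  if e.1 e.2 = -1 then (a e.2 : ℤ) else e.1 e.2

/-- defect candidate set -/
def dset (a : Fin n → ℕ) (j : Fin n) (x : Fin n → ℤ) (b : ℕ) : Finset (Fin n) :=
  Finset.univ.filter (fun r => r ≠ j ∧ r.val < b ∧ Even (a r) ∧ (x r = 1 ∨ x r = 2))

lemma mem_dset {a : Fin n → ℕ} {j : Fin n} {x : Fin n → ℤ} {b : ℕ} {r : Fin n} :
    r ∈ dset a j x b ↔ r ≠ j ∧ r.val < b ∧ Even (a r) ∧ (x r = 1 ∨ x r = 2) := by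
  simp [dset]

/-- The defect color. -/
def mu (a : Fin n → ℕ) (j : Fin n) (x : Fin n → ℤ) (b : ℕ) : Fin n × Bool :=
  if h : (dset a j x b).Nonempty then
    ((dset a j x b).max' h, decide (x ((dset a j x b).max' h) = 2))
  else (j, true)

lemma mu_cases (a : Fin n → ℕ) (j : Fin n) (x : Fin n → ℤ) (b : ℕ) :
    ((¬ (dset a j x b).Nonempty) ∧ mu a j x b = (j, true)) ∨
    ((mu a j x b).1 ∈ dset a j x b ∧
      (mu a j x b).2 = decide (x (mu a j x b).1 = 2) ∧
      ∀ r ∈ dset a j x b, r ≤ (mu a j x b).1) := by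
  unfold mu
  by_cases h : (dset a j x b).Nonempty
  · right
    rw [dif_pos h]
    exact ⟨Finset.max'_mem _ h, rfl, fun r hr => Finset.le_max' _ _ hr⟩
  · left; exact ⟨h, dif_neg h⟩

/-- The color of an edge. -/
def colr (a : Fin n → ℕ) (j : Fin n) (e : GridEdge n) : Fin n × Bool :=
  if e.2 = j then (if qv a e % 2 = 1 then (j, false) else mu a j e.1 n)
  else if Even (a e.2) then
    (if qv a e = 0 then (e.2, true)
     else if qv a e = 1 then mu a j e.1 e.2.val
     else (e.2, decide (qv a e % 2 = 1)))
  else (e.2, decide (qv a e % 2 = 0))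

/-- Whether an edge is a "defect" edge (one whose color is a `mu`-value). -/
def isDef (a : Fin n → ℕ) (j : Fin n) (e : GridEdge n) : Prop :=
  (e.2 = j ∧ ¬ (qv a e % 2 = 1)) ∨ (e.2 ≠ j ∧ Even (a e.2) ∧ qv a e = 1)

def Rel (a : Fin n → ℕ) (e : GridEdge n) : Prop := edgeIn 0 a e ∨ edgeAdj 0 a e

lemma rightEnd_apply (e : GridEdge n) (r : Fin n) :
    rightEnd e r = e.1 r + if r = e.2 then 1 else 0 := by
  simp [rightEnd, Pi.single_apply]

lemma rightEnd_apply' (x : Fin n → ℤ) (i r : Fin n) :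
    rightEnd ((x, i) : GridEdge n) r = x r + if r = i then 1 else 0 := by
  simp [rightEnd, Pi.single_apply]

lemma rel_bounds {a : Fin n → ℕ} {e : GridEdge n} (h : Rel a e) :
    (∀ r, r ≠ e.2 → 0 ≤ e.1 r ∧ e.1 r ≤ a r) ∧ (-1 ≤ e.1 e.2 ∧ e.1 e.2 ≤ a e.2) := by
  have key : ∀ x : Fin n → ℤ, inRect 0 a x →
      ∀ r, 0 ≤ x r ∧ x r ≤ a r := by
    intro x hx r
    have := hx r
    simp only [Pi.zero_apply, zero_add] at this
    exact this
  have hre : ∀ r, rightEnd e r = e.1 r + if r = e.2 then 1 else 0 := rightEnd_apply e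
  rcases h with ⟨h1, _⟩ | ⟨_, h | h⟩
  · have h1' := key _ h1
    refine ⟨fun r _ => h1' r, ?_, ?_⟩ <;> have := h1' e.2 <;> omega
  · have h1' := key _ h
    refine ⟨fun r _ => h1' r, ?_, ?_⟩ <;> have := h1' e.2 <;> omega
  · have h1' := key _ h
    refine ⟨fun r hr => ?_, ?_, ?_⟩
    · have := h1' r; have := hre r; rw [if_neg hr] at this; omega
    · have := h1' e.2; have := hre e.2; rw [if_pos rfl] at this; omega
    · have := h1' e.2; have := hre e.2; rw [if_pos rfl] at this; omega

lemma adj_char {a : Fin n → ℕ} {e : GridEdge n} (h : edgeAdj 0 a e) :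
    e.1 e.2 = -1 ∨ e.1 e.2 = a e.2 := by
  have hre : ∀ r, rightEnd e r = e.1 r + if r = e.2 then 1 else 0 := rightEnd_apply e
  have hchar : ∀ x : Fin n → ℤ, inRect 0 a x ↔ ∀ r, 0 ≤ x r ∧ x r ≤ a r := by
    intro x
    constructor
    · intro hx r; have := hx r; simp only [Pi.zero_apply, zero_add] at this; exact this
    · intro hx r; have := hx r; simp only [Pi.zero_apply, zero_add]; exact this
  obtain ⟨hni, hior⟩ := h
  rcases hior with h1 | h1
  · right
    by_contra hc
    apply hni
    refine ⟨h1, (hchar _).2 fun r => ?_⟩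
    have h2 := (hchar _).1 h1 r
    have h3 := (hchar _).1 h1 e.2
    have := hre r
    by_cases hr : r = e.2
    · subst hr; rw [if_pos rfl] at this; omega
    · rw [if_neg hr] at this; omega
  · left
    by_contra hc
    apply hni
    refine ⟨(hchar _).2 fun r => ?_, h1⟩
    have h2 := (hchar _).1 h1 r
    have h3 := (hchar _).1 h1 e.2
    have h4 := hre r
    have h5 := hre e.2
    rw [if_pos rfl] at h5
    by_cases hr : r = e.2
    · subst hr; omega
    · rw [if_neg hr] at h4; omega

lemma mu_ne_jfalse {a : Fin n → ℕ} {j : Fin n} {x : Fin n → ℤ} {b : ℕ} :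
    mu a j x b ≠ (j, false) := by
  rcases mu_cases a j x b with ⟨_, h⟩ | ⟨h1, _, _⟩
  · rw [h]; simp
  · intro hc
    rw [hc] at h1
    exact (mem_dset.1 h1).1 rfl

lemma mu_ne_self {a : Fin n → ℕ} {j : Fin n} {x : Fin n → ℤ} {b : ℕ} {k : Fin n} {c : Bool}
    (hkj : k ≠ j) (hbk : b ≤ k.val) : mu a j x b ≠ (k, c) := by
  rcases mu_cases a j x b with ⟨_, h⟩ | ⟨h1, _, _⟩
  · rw [h]; intro hc
    exact hkj (by simpa using (congrArg Prod.fst hc).symm)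
  · intro hc
    have hfst : (mu a j x b).1 = k := by rw [hc]
    rw [hfst] at h1
    have := (mem_dset.1 h1).2.1
    omega

lemma colr_j_odd {a : Fin n → ℕ} {j : Fin n} {e : GridEdge n}
    (h1 : e.2 = j) (h2 : qv a e % 2 = 1) : colr a j e = (j, false) := by
  simp [colr, h1, h2]

lemma colr_j_even {a : Fin n → ℕ} {j : Fin n} {e : GridEdge n}
    (h1 : e.2 = j) (h2 : ¬ qv a e % 2 = 1) : colr a j e = mu a j e.1 n := by
  simp [colr, h1, h2]

lemma colr_O_zero {a : Fin n → ℕ} {j : Fin n} {e : GridEdge n}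
    (h1 : e.2 ≠ j) (h2 : Even (a e.2)) (h3 : qv a e = 0) : colr a j e = (e.2, true) := by
  simp [colr, h1, h2, h3]

lemma colr_O_one {a : Fin n → ℕ} {j : Fin n} {e : GridEdge n}
    (h1 : e.2 ≠ j) (h2 : Even (a e.2)) (h3 : qv a e = 1) :
    colr a j e = mu a j e.1 e.2.val := by
  simp [colr, h1, h2, h3]

lemma colr_O_big {a : Fin n → ℕ} {j : Fin n} {e : GridEdge n}
    (h1 : e.2 ≠ j) (h2 : Even (a e.2)) (h3 : qv a e ≠ 0) (h4 : qv a e ≠ 1) :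
    colr a j e = (e.2, decide (qv a e % 2 = 1)) := by
  simp [colr, h1, h2, h3, h4]

lemma colr_odd {a : Fin n → ℕ} {j : Fin n} {e : GridEdge n}
    (h1 : e.2 ≠ j) (h2 : ¬ Even (a e.2)) :
    colr a j e = (e.2, decide (qv a e % 2 = 0)) := by
  simp [colr, h1, h2]

lemma colr_norm_spec {a : Fin n → ℕ} {j : Fin n} {e : GridEdge n}
    (hnd : ¬ isDef a j e) :
    ∃ c, colr a j e = (e.2, c) ∧
      (e.2 = j → c = false) ∧
      (e.2 ≠ j → Even (a e.2) → qv a e = 0 → c = true) ∧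
      (e.2 ≠ j → Even (a e.2) → 2 ≤ qv a e → c = decide (qv a e % 2 = 1)) := by
  unfold isDef at hnd
  push_neg at hnd
  obtain ⟨hd1, hd2⟩ := hnd
  by_cases h1 : e.2 = j
  · have hq : qv a e % 2 = 1 := hd1 h1
    refine ⟨false, ?_, fun _ => rfl, fun h => absurd h1 h, fun h => absurd h1 h⟩
    rw [colr_j_odd h1 hq, h1]
  · by_cases h2 : Even (a e.2)
    · have hq1 : qv a e ≠ 1 := hd2 h1 h2
      by_cases h3 : qv a e = 0
      · refine ⟨true, colr_O_zero h1 h2 h3, fun h => absurd h h1, fun _ _ _ => rfl, ?_⟩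
        intro _ _ hge; omega
      · refine ⟨decide (qv a e % 2 = 1), colr_O_big h1 h2 h3 hq1, fun h => absurd h h1,
          fun _ _ h0 => absurd h0 h3, fun _ _ _ => rfl⟩
    · exact ⟨decide (qv a e % 2 = 0), colr_odd h1 h2, fun h => absurd h h1,
        fun _ he => absurd he h2, fun _ he => absurd he h2⟩

lemma cast_even {m : ℕ} (h : Even m) : (m : ℤ) % 2 = 0 := by
  rcases h with ⟨t, ht⟩; omega

lemma cast_odd {m : ℕ} (h : Odd m) : (m : ℤ) % 2 = 1 := by
  rcases h with ⟨t, ht⟩; omega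

lemma aux1 {a : Fin n → ℕ} {j : Fin n} (hjodd : Odd (a j)) (ha : ∀ i, 1 ≤ a i)
    (x : Fin n → ℤ) (i : Fin n)
    (hx : Rel a (x, i)) (hy : Rel a (x + Pi.single i 1, i)) :
    colr a j (x, i) ≠ colr a j (x + Pi.single i 1, i) := by
  set y := x + Pi.single i 1 with hydef
  have hyi : y i = x i + 1 := by simp [hydef, Pi.single_apply]
  have hbx := (rel_bounds hx).2
  have hby := (rel_bounds hy).2
  simp only at hbx hby
  rw [hyi] at hby
  have hqx : qv a (x, i) = if x i = -1 then (a i : ℤ) else x i := rfl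
  have hqy : qv a (y, i) = x i + 1 := by
    show (if y i = -1 then (a i : ℤ) else y i) = x i + 1
    rw [hyi, if_neg (by omega)]
  by_cases hij : i = j
  · have hodd : (a i : ℤ) % 2 = 1 := by rw [hij]; exact cast_odd hjodd
    have hij1 : ((x, i) : GridEdge n).2 = j := hij
    have hij2 : ((y, i) : GridEdge n).2 = j := hij
    by_cases hneg : x i = -1
    · have hqx' : qv a (x, i) = (a i : ℤ) := by rw [hqx, if_pos hneg]
      rw [colr_j_odd hij1 (by omega), colr_j_even hij2 (by omega)]
      exact fun h => mu_ne_jfalse h.symm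
    · have hqx' : qv a (x, i) = x i := by rw [hqx, if_neg hneg]
      by_cases hpar : x i % 2 = 1
      · rw [colr_j_odd hij1 (by omega), colr_j_even hij2 (by omega)]
        exact fun h => mu_ne_jfalse h.symm
      · rw [colr_j_even hij1 (by omega), colr_j_odd hij2 (by omega)]
        exact mu_ne_jfalse
  · by_cases hev : Even (a i)
    · have ha2 : 2 ≤ a i := by
        rcases hev with ⟨t, ht⟩; have := ha i; omega
      have haev : (a i : ℤ) % 2 = 0 := cast_even hev
      by_cases hneg : x i = -1
      · have hqx' : qv a (x, i) = (a i : ℤ) := by rw [hqx, if_pos hneg]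
        rw [colr_O_big hij hev (by omega) (by omega), colr_O_zero hij hev (by omega)]
        simp only [ne_eq, Prod.mk.injEq, not_and]
        intro _
        simp only [decide_eq_true_eq]
        omega
      · have hqx' : qv a (x, i) = x i := by rw [hqx, if_neg hneg]
        rcases (show x i = 0 ∨ x i = 1 ∨ 2 ≤ x i by omega) with h0 | h1 | h2
        · rw [colr_O_zero hij hev (by omega), colr_O_one hij hev (by omega)]
          exact fun h => mu_ne_self hij (le_refl _) h.symm
        · rw [colr_O_one hij hev (by omega), colr_O_big hij hev (by omega) (by omega)]
          exact mu_ne_self hij (le_refl _)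
        · rw [colr_O_big hij hev (by omega) (by omega),
            colr_O_big hij hev (by omega) (by omega)]
          simp only [ne_eq, Prod.mk.injEq, not_and, decide_eq_decide]
          intro _
          rw [hqx', hqy]
          omega
    · have haodd : (a i : ℤ) % 2 = 1 := by
        rcases Nat.even_or_odd (a i) with h | h
        · exact absurd h hev
        · exact cast_odd h
      rw [colr_odd hij hev, colr_odd hij hev]
      simp only [ne_eq, Prod.mk.injEq, not_and, decide_eq_decide]
      intro _
      rw [hqy]
      by_cases hneg : x i = -1
      · rw [hqx, if_pos hneg]; omega
      · rw [hqx, if_neg hneg]; omega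

lemma auxA {a : Fin n → ℕ} {j : Fin n} (ha : ∀ i, 1 ≤ a i)
    (x y : Fin n → ℤ) (k : Fin n) (b : ℕ)
    (hky : Rel a (y, k))
    (hxk : x k = y k ∨ x k = y k + 1)
    (hnd : ¬ isDef a j (y, k)) :
    mu a j x b ≠ colr a j (y, k) := by
  obtain ⟨c, hc, hcj, hc0, hcbig⟩ := colr_norm_spec hnd
  simp only at hc hcj hc0 hcbig
  rw [hc]
  rcases mu_cases a j x b with ⟨_, hm⟩ | ⟨h1, h2, h3⟩
  · rw [hm]
    intro heq
    have hjk : j = k := by simpa using congrArg Prod.fst heq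
    have : c = true := by simpa using (congrArg Prod.snd heq)
    rw [hcj hjk.symm] at this
    exact Bool.false_ne_true this
  · intro heq
    have hfst : (mu a j x b).1 = k := by rw [heq]
    have hsnd : (mu a j x b).2 = c := by rw [heq]
    rw [hfst] at h1 h2
    obtain ⟨hkj, _, hkev, hxk12⟩ := mem_dset.1 h1
    have hq1 : qv a (y, k) ≠ 1 := by
      intro hq
      exact hnd (Or.inr ⟨hkj, hkev, hq⟩)
    have hby := (rel_bounds hky).2
    simp only at hby
    have ha2 : 2 ≤ a k := by rcases hkev with ⟨t, ht⟩; have := ha k; omega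
    have hqy : qv a (y, k) = if y k = -1 then (a k : ℤ) else y k := rfl
    rcases hxk12 with hx1 | hx2
    · -- x k = 1, so y k ∈ {0, 1}; y k = 1 is excluded
      have hy0 : y k = 0 := by
        rcases hxk with h | h
        · exfalso; apply hq1; rw [hqy, if_neg (by omega)]; omega
        · omega
      have hq0 : qv a (y, k) = 0 := by rw [hqy, if_neg (by omega)]; omega
      have : c = true := hc0 hkj hkev hq0
      rw [this] at hsnd
      rw [h2, hx1] at hsnd
      simp at hsnd
    · -- x k = 2, so y k ∈ {1, 2}; y k = 1 is excluded
      have hy2 : y k = 2 := by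
        rcases hxk with h | h
        · omega
        · exfalso; apply hq1; rw [hqy, if_neg (by omega)]; omega
      have hq2 : qv a (y, k) = 2 := by rw [hqy, if_neg (by omega)]; omega
      have : c = decide (qv a (y, k) % 2 = 1) := hcbig hkj hkev (by omega)
      rw [hq2] at this
      simp only [show (2 : ℤ) % 2 = 0 by norm_num] at this
      rw [h2, hx2] at hsnd
      simp at hsnd
      rw [hsnd] at this
      simp at this

lemma auxB {a : Fin n → ℕ} {j : Fin n}
    (x y : Fin n → ℤ) (i : Fin n) (bi bk : ℕ)
    (hibk : i.val < bk) (hij : i ≠ j) (hiEv : Even (a i))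
    (hyi : y i = 1 ∨ y i = 2)
    (hbi : bi ≤ i.val) :
    mu a j x bi ≠ mu a j y bk := by
  have hidset : i ∈ dset a j y bk := mem_dset.2 ⟨hij, hibk, hiEv, hyi⟩
  rcases mu_cases a j y bk with ⟨hemp, _⟩ | ⟨h1, _, h3⟩
  · exact absurd ⟨i, hidset⟩ hemp
  · have hRj : (mu a j y bk).1 ≠ j := (mem_dset.1 h1).1
    have hRge : i ≤ (mu a j y bk).1 := h3 i hidset
    rcases mu_cases a j x bi with ⟨_, hm'⟩ | ⟨h1', _, _⟩
    · rw [hm']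
      intro heq
      exact hRj (by simpa using (congrArg Prod.fst heq).symm)
    · intro heq
      have hfst : (mu a j x bi).1 = (mu a j y bk).1 := congrArg Prod.fst heq
      have hlt : ((mu a j x bi).1).val < bi := (mem_dset.1 h1').2.1
      have : (i : Fin n).val ≤ ((mu a j y bk).1).val := hRge
      rw [hfst] at hlt
      omega

lemma qv_one_coord {a : Fin n → ℕ} {x : Fin n → ℤ} {i : Fin n}
    (hrel : Rel a (x, i)) (hev : Even (a i)) (ha : ∀ r, 1 ≤ a r)
    (hq : qv a (x, i) = 1) : x i = 1 := by
  have hb := (rel_bounds hrel).2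
  simp only at hb
  have ha2 : 2 ≤ a i := by rcases hev with ⟨t, ht⟩; have := ha i; omega
  have hqx : qv a (x, i) = if x i = -1 then (a i : ℤ) else x i := rfl
  by_cases hneg : x i = -1
  · rw [hqx, if_pos hneg] at hq; omega
  · rw [hqx, if_neg hneg] at hq; omega

lemma aux2 {a : Fin n → ℕ} {j : Fin n} (ha : ∀ i, 1 ≤ a i)
    (x y : Fin n → ℤ) (i k : Fin n) (hik : i ≠ k)
    (hx : Rel a (x, i)) (hy : Rel a (y, k))
    (hxk : x k = y k ∨ x k = y k + 1) (hyi : y i = x i ∨ y i = x i + 1) :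
    colr a j (x, i) ≠ colr a j (y, k) := by
  by_cases hde : isDef a j (x, i) <;> by_cases hdf : isDef a j (y, k)
  · -- both defect
    rcases hde with ⟨hij', hqx'⟩ | ⟨hij', hev, hq1⟩
    · -- i = j, hence k ≠ j and f is an O-defect
      simp only at hij' hqx'
      rcases hdf with ⟨hkj', _⟩ | ⟨hkj', hkev, hkq1⟩
      · exact absurd (hij'.trans (show j = k from hkj'.symm)) hik
      · simp only at hkj' hkq1
        have hyk1 : y k = 1 := qv_one_coord hy hkev ha hkq1
        have hxk12 : x k = 1 ∨ x k = 2 := by omega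
        rw [colr_j_even hij' hqx', colr_O_one hkj' hkev hkq1]
        have := auxB (a := a) (j := j) y x k k.val n k.isLt hkj' hkev hxk12 (le_refl _)
        rw [hij']
        exact this.symm
    · simp only at hij' hq1
      have hxi1 : x i = 1 := qv_one_coord hx hev ha hq1
      have hyi12 : y i = 1 ∨ y i = 2 := by omega
      rcases hdf with ⟨hkj', hkq'⟩ | ⟨hkj', hkev, hkq1⟩
      · -- k = j
        simp only at hkj' hkq'
        rw [colr_O_one hij' hev hq1, colr_j_even hkj' hkq']
        exact auxB x y i i.val n i.isLt hij' hev hyi12 (le_refl _)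
      · simp only at hkj' hkq1
        have hyk1 : y k = 1 := qv_one_coord hy hkev ha hkq1
        have hxk12 : x k = 1 ∨ x k = 2 := by omega
        rw [colr_O_one hij' hev hq1, colr_O_one hkj' hkev hkq1]
        have hvne : i.val ≠ k.val := fun h => hik (Fin.ext h)
        rcases Nat.lt_or_ge i.val k.val with hlt | hge
        · exact auxB x y i i.val k.val hlt hij' hev hyi12 (le_refl _)
        · have hlt : k.val < i.val := by omega
          exact (auxB y x k k.val i.val hlt hkj' hkev hxk12 (le_refl _)).symm
  · -- e defect, f normal
    have hce : colr a j (x, i) = mu a j x (if i = j then n else i.val) := by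
      rcases hde with ⟨hij', hqx'⟩ | ⟨hij', hev, hq1⟩
      · simp only at hij' hqx'
        rw [colr_j_even hij' hqx', if_pos hij']
      · simp only at hij' hev hq1
        rw [colr_O_one hij' hev hq1, if_neg hij']
    rw [hce]
    exact auxA ha x y k _ hy hxk hdf
  · -- e normal, f defect
    have hcf : colr a j (y, k) = mu a j y (if k = j then n else k.val) := by
      rcases hdf with ⟨hkj', hkq'⟩ | ⟨hkj', hkev, hkq1⟩
      · simp only at hkj' hkq'
        rw [colr_j_even hkj' hkq', if_pos hkj']
      · simp only at hkj' hkev hkq1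
        rw [colr_O_one hkj' hkev hkq1, if_neg hkj']
    rw [hcf]
    exact (auxA ha y x i _ hx hyi hde).symm
  · -- both normal
    obtain ⟨c, hc, _⟩ := colr_norm_spec hde
    obtain ⟨c', hc', _⟩ := colr_norm_spec hdf
    simp only at hc hc'
    rw [hc, hc']
    intro heq
    exact hik (by simpa using congrArg Prod.fst heq)

lemma key {a : Fin n → ℕ} {j : Fin n} (hjodd : Odd (a j)) (ha : ∀ i, 1 ≤ a i)
    (e f : GridEdge n) (he : Rel a e) (hf : Rel a f) (hne : e ≠ f)
    (hsh : sharesVertex e f) : colr a j e ≠ colr a j f := by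
  obtain ⟨x, i⟩ := e
  obtain ⟨y, k⟩ := f
  by_cases hik : i = k
  · subst hik
    rcases hsh with h | h | h | h
    · simp only at h
      exact absurd (by rw [h]) hne
    · have h' : x = y + Pi.single i 1 := h
      subst h'
      exact (aux1 hjodd ha y i hf he).symm
    · have h' : y = x + Pi.single i 1 := h.symm
      subst h'
      exact aux1 hjodd ha x i he hf
    · have h' : x = y := by
        funext r
        have := congrFun h r
        simp only [rightEnd_apply] at this
        omega
      exact absurd (by rw [h']) hne
  · have hco : (x k = y k ∨ x k = y k + 1) ∧ (y i = x i ∨ y i = x i + 1) := by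
      have hki : ¬ (k = i) := fun hh => hik hh.symm
      rcases hsh with h | h | h | h
      · have hk := congrFun h k
        have hi := congrFun h i
        simp only at hk hi
        exact ⟨Or.inl hk, Or.inl hi.symm⟩
      · have hk := congrFun h k
        have hi := congrFun h i
        simp only at hk hi
        rw [rightEnd_apply' y k k, if_pos rfl] at hk
        rw [rightEnd_apply' y k i, if_neg hik] at hi
        exact ⟨Or.inr (by omega), Or.inl (by omega)⟩
      · have hk := congrFun h k
        have hi := congrFun h i
        simp only at hk hi
        rw [rightEnd_apply' x i k, if_neg hki] at hk
        rw [rightEnd_apply' x i i, if_pos rfl] at hi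
        exact ⟨Or.inl (by omega), Or.inr (by omega)⟩
      · have hk := congrFun h k
        have hi := congrFun h i
        rw [rightEnd_apply' x i k, if_neg hki, rightEnd_apply' y k k, if_pos rfl] at hk
        rw [rightEnd_apply' x i i, if_pos rfl, rightEnd_apply' y k i, if_neg hik] at hi
        exact ⟨Or.inr (by omega), Or.inr (by omega)⟩
    exact aux2 ha x y i k hik he hf hco.1 hco.2

lemma seam {a : Fin n → ℕ} {j : Fin n} (hjodd : Odd (a j)) (ha : ∀ i, 1 ≤ a i)
    (e : GridEdge n) (hadj : edgeAdj 0 a e) : colr a j e = (e.2, false) := by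
  have h := adj_char hadj
  have hq : qv a e = (a e.2 : ℤ) := by
    show (if e.1 e.2 = -1 then (a e.2 : ℤ) else e.1 e.2) = (a e.2 : ℤ)
    have := ha e.2
    rcases h with h | h
    · rw [if_pos h]
    · rw [h, if_neg (by omega)]
  by_cases hij : e.2 = j
  · have hodd : (a e.2 : ℤ) % 2 = 1 := by rw [hij]; exact cast_odd hjodd
    rw [colr_j_odd hij (by omega), hij]
  · by_cases hev : Even (a e.2)
    · have ha2 : 2 ≤ a e.2 := by rcases hev with ⟨t, ht⟩; have := ha e.2; omega
      have haev : (a e.2 : ℤ) % 2 = 0 := cast_even hev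
      rw [colr_O_big hij hev (by omega) (by omega)]
      simp only [Prod.mk.injEq, true_and]
      simp only [decide_eq_false_iff_not]
      omega
    · have haodd : (a e.2 : ℤ) % 2 = 1 := by
        rcases Nat.even_or_odd (a e.2) with hh | hh
        · exact absurd hh hev
        · exact cast_odd hh
      rw [colr_odd hij hev]
      simp only [Prod.mk.injEq, true_and, decide_eq_false_iff_not]
      omega

end RectColor

/-- If some side length `a_i` of the rectangle `R = [0,a_1] × ⋯ × [0,a_n]` is odd, then there
is a proper edge `2n`-coloring of the edges in `R` together with the edges adjacent to `R`,
such that for each `i` all edges adjacent to `R` parallel to `e_i` receive the same fixed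
color `c_i`. -/


theorem rect_boundary_coloring_odd (n : ℕ) (hn : 1 ≤ n) (a : Fin n → ℕ)
    (ha : ∀ i, 1 ≤ a i) (hodd : ∃ i, Odd (a i)) :
    ∃ (c : GridEdge n → Fin (2 * n)) (col : Fin n → Fin (2 * n)),
      (∀ e f : GridEdge n,
        (edgeIn 0 a e ∨ edgeAdj 0 a e) → (edgeIn 0 a f ∨ edgeAdj 0 a f) →
        e ≠ f → sharesVertex e f → c e ≠ c f) ∧
      (∀ e : GridEdge n, edgeAdj 0 a e → c e = col e.2) := by
  classical
  obtain ⟨j, hj⟩ := hodd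
  refine ⟨fun e => RectColor.emb n (RectColor.colr a j e),
    fun i => RectColor.emb n (i, false), ?_, ?_⟩
  · intro e f he hf hne hsh hEq
    exact RectColor.key hj ha e f he hf hne hsh (RectColor.emb_inj n hEq)
  · intro e hadj
    show RectColor.emb n (RectColor.colr a j e) = RectColor.emb n (e.2, false)
    rw [RectColor.seam hj ha e hadj]
end

section
/- Let k ≥ 0 and d = 4k+2. For the n-dimensional cube R = [0,d]^n in ℤ^n, there is a proper edge (2n+1)-coloring of the edges in R and adjacent to R such that: (1) for each i, all edges adjacent to R parallel to e_i have the same color c_i, and (2) the (2n+1)-st color is used only on edges of the core K = [d/2 - 1, d/2 + 1]^n of R. -/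
/-!
Colour the edges of a line in direction `i` alternately with the two colours `(i, 0)` and
`(i, 1)`. A line through the region has `4k + 4` edges, an even number, so for both of its
edges adjacent to the cube to get `(i, 0)` the alternation has to break once: every line has
one defect edge, which borrows a colour of another direction.

The values `0, …, 4k + 2` except `2k + 2` are grouped into consecutive pairs, each with a level,
and a line's defect sits at the least level among its other coordinates. Then at both endpoints
of a defect edge in direction `i` the level of the `i`-th coordinate is minimal among all
coordinates. At a vertex `v`, the defect edges in the directions `S` of minimal level borrow
the directions `σ i` for a cyclic permutation `σ` of `S`, so they never clash with each other,
and their parity is chosen opposite to that of the ordinary `σ i`-edge at `v`. Only the central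
line, all of whose other coordinates equal `2k + 2`, has no level to borrow from; its defect is
the core edge from `2k` to `2k + 1`, which gets the extra colour.
-/

open Finset

section Grid

variable {n : ℕ} {b : Fin n → ℤ} {a : Fin n → ℕ}

lemma rightEnd_apply_self (x : Fin n → ℤ) (i : Fin n) : rightEnd (x, i) i = x i + 1 := by
  simp [rightEnd]

lemma rightEnd_apply_of_ne {x : Fin n → ℤ} {i l : Fin n} (h : l ≠ i) :
    rightEnd (x, i) l = x l := by
  simp [rightEnd, h]

lemma inRect_iff_forall_ne {x : Fin n → ℤ} (i : Fin n) :
    inRect b a x ↔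
      (∀ l ≠ i, b l ≤ x l ∧ x l ≤ b l + a l) ∧ b i ≤ x i ∧ x i ≤ b i + a i :=
  ⟨fun h => ⟨fun l _ => h l, h i⟩, fun ⟨h, hi⟩ l => (eq_or_ne l i).elim (· ▸ hi) (h l)⟩

lemma inRect_rightEnd_iff {x : Fin n → ℤ} {i : Fin n} :
    inRect b a (rightEnd (x, i)) ↔
      (∀ l ≠ i, b l ≤ x l ∧ x l ≤ b l + a l) ∧ b i ≤ x i + 1 ∧ x i + 1 ≤ b i + a i := by
  rw [inRect_iff_forall_ne i, rightEnd_apply_self]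
  exact and_congr_left' (forall₂_congr fun l hl => by rw [rightEnd_apply_of_ne hl])

lemma edgeIn_mk_iff {x : Fin n → ℤ} {i : Fin n} :
    edgeIn b a (x, i) ↔
      (∀ l ≠ i, b l ≤ x l ∧ x l ≤ b l + a l) ∧ b i ≤ x i ∧ x i + 1 ≤ b i + a i := by
  dsimp only [edgeIn]
  rw [inRect_iff_forall_ne i, inRect_rightEnd_iff]
  exact ⟨fun ⟨⟨h, _⟩, _⟩ => ⟨h, by omega⟩, fun ⟨h, _⟩ => ⟨⟨h, by omega⟩, h, by omega⟩⟩

lemma edgeAdj_mk_iff {x : Fin n → ℤ} {i : Fin n} :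
    edgeAdj b a (x, i) ↔
      (∀ l ≠ i, b l ≤ x l ∧ x l ≤ b l + a l) ∧ (x i + 1 = b i ∨ x i = b i + a i) := by
  dsimp only [edgeAdj]
  rw [edgeIn_mk_iff, inRect_iff_forall_ne i, inRect_rightEnd_iff]
  constructor
  · rintro ⟨hn, ⟨h, _⟩ | ⟨h, _⟩⟩ <;>
      exact ⟨h, by by_contra; exact hn ⟨h, by omega, by omega⟩⟩
  · rintro ⟨h, hi | hi⟩
    · exact ⟨fun ⟨_, _, _⟩ => by omega, .inr ⟨h, by omega, by omega⟩⟩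
    · exact ⟨fun ⟨_, _, _⟩ => by omega, .inl ⟨h, by omega, by omega⟩⟩

lemma edgeIn_or_edgeAdj_mk_iff {x : Fin n → ℤ} {i : Fin n} :
    edgeIn b a (x, i) ∨ edgeAdj b a (x, i) ↔
      (∀ l ≠ i, b l ≤ x l ∧ x l ≤ b l + a l) ∧ b i ≤ x i + 1 ∧ x i ≤ b i + a i := by
  rw [edgeIn_mk_iff, edgeAdj_mk_iff]
  constructor
  · rintro (⟨h, _⟩ | ⟨h, _⟩) <;> exact ⟨h, by omega⟩
  · rintro ⟨h, hi⟩
    by_cases hin : b i ≤ x i ∧ x i + 1 ≤ b i + a i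
    · exact .inl ⟨h, hin⟩
    · exact .inr ⟨h, by omega⟩

def IsEndpoint (v : Fin n → ℤ) (e : GridEdge n) : Prop := v = e.1 ∨ v = rightEnd e

lemma IsEndpoint.apply_of_ne {v x : Fin n → ℤ} {i l : Fin n} (hv : IsEndpoint v (x, i))
    (hl : l ≠ i) : v l = x l := by
  rcases hv with rfl | rfl
  · rfl
  · exact rightEnd_apply_of_ne hl

lemma IsEndpoint.apply_self {v x : Fin n → ℤ} {i : Fin n} (hv : IsEndpoint v (x, i)) :
    v i = x i ∨ v i = x i + 1 := by
  rcases hv with rfl | rfl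
  · exact .inl rfl
  · exact .inr (rightEnd_apply_self x i)

lemma sharesVertex_iff {e f : GridEdge n} :
    sharesVertex e f ↔ ∃ v, IsEndpoint v e ∧ IsEndpoint v f := by
  constructor
  · rintro (h | h | h | h)
    exacts [⟨_, .inl rfl, .inl h⟩, ⟨_, .inl rfl, .inr h⟩, ⟨_, .inr rfl, .inl h⟩,
      ⟨_, .inr rfl, .inr h⟩]
  · rintro ⟨v, rfl | rfl, h | h⟩
    exacts [.inl h, .inr (.inl h), .inr (.inr (.inl h)), .inr (.inr (.inr h))]

lemma eq_or_eq_rightEnd_of_sharesVertex {x z : Fin n → ℤ} {i : Fin n}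
    (h : sharesVertex (x, i) (z, i)) : x = z ∨ z = rightEnd (x, i) ∨ x = rightEnd (z, i) := by
  rcases h with h | h | h | h
  · exact .inl h
  · exact .inr (.inr h)
  · exact .inr (.inl h.symm)
  · exact .inl (add_right_cancel h)

end Grid

section CyclicPerm

variable {α : Type*} [DecidableEq α]

noncomputable def cyclicPerm (S : Finset α) : Equiv.Perm α := S.toList.formPerm

lemma cyclicPerm_mem {S : Finset α} {a : α} (ha : a ∈ S) : cyclicPerm S a ∈ S :=
  mem_toList.mp (List.formPerm_apply_mem_of_mem (mem_toList.mpr ha))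

lemma cyclicPerm_apply_ne {S : Finset α} {a b : α} (ha : a ∈ S) (hb : b ∈ S) (hab : a ≠ b) :
    cyclicPerm S a ≠ a := by
  rw [cyclicPerm, List.formPerm_apply_mem_ne_self_iff _ S.nodup_toList _ (mem_toList.mpr ha),
    length_toList]
  exact one_lt_card.mpr ⟨a, ha, b, hb, hab⟩

end CyclicPerm

namespace CubeCoreColoring

variable {n k : ℕ}

/-- The pairs `{0, 1}, …, {2k, 2k + 1}` and `{2k + 3, 2k + 4}, …, {4k + 1, 4k + 2}`, each
labelled by its smaller element; the unpaired value `2k + 2` has level `⊤`. -/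
def level (k : ℕ) (t : ℤ) : WithTop ℤ :=
  if t = 2 * k + 2 then ⊤ else if t ≤ 2 * k + 1 then ↑(t - t % 2) else ↑(t - (t + 1) % 2)

lemma level_eq_top_iff {t : ℤ} : level k t = ⊤ ↔ t = 2 * k + 2 := by
  unfold level
  split_ifs <;> simp_all

lemma level_two_mul : level k (2 * k) = ↑(2 * k : ℤ) := by
  unfold level
  split_ifs <;> (try simp only [WithTop.coe_inj]) <;> omega

lemma level_two_mul_add_one : level k (2 * k + 1) = ↑(2 * k : ℤ) := by
  unfold level
  split_ifs <;> (try simp only [WithTop.coe_inj]) <;> omega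

lemma pair_of_level_eq_coe {t q : ℤ} (h0 : 0 ≤ t) (h1 : t ≤ 4 * k + 2) (h : level k t = q) :
    0 ≤ q ∧ q + 1 ≤ 4 * k + 2 ∧ (t = q ∨ t = q + 1) ∧ level k q = q ∧ level k (q + 1) = q := by
  unfold level at h ⊢
  split_ifs at h ⊢ <;> simp only [WithTop.coe_inj, WithTop.top_ne_coe] at h ⊢ <;> omega

def LineMeetsCube (k : ℕ) (x : Fin n → ℤ) (i : Fin n) : Prop :=
  ∀ l ≠ i, 0 ≤ x l ∧ x l ≤ 4 * k + 2

def lineLevel (k : ℕ) (x : Fin n → ℤ) (i : Fin n) : WithTop ℤ :=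
  (univ.erase i).inf fun l => level k (x l)

/-- The line through `x` in direction `i` has its defect edge from `defectPos` to
`defectPos + 1`; on the central line (`lineLevel = ⊤`) this is the core edge from `2k`. -/
def defectPos (k : ℕ) (x : Fin n → ℤ) (i : Fin n) : ℤ := (lineLevel k x i).untopD (2 * k)

variable {x y v z : Fin n → ℤ} {i j l : Fin n}

lemma lineLevel_le (h : l ≠ i) : lineLevel k x i ≤ level k (x l) :=
  inf_le (mem_erase.mpr ⟨h, mem_univ l⟩)

lemma le_lineLevel {a : WithTop ℤ} (h : ∀ l ≠ i, a ≤ level k (x l)) : a ≤ lineLevel k x i :=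
  Finset.le_inf fun l hl => h l (mem_erase.mp hl).1

lemma lineLevel_congr (h : ∀ l ≠ i, x l = y l) : lineLevel k x i = lineLevel k y i :=
  inf_congr rfl fun l hl => by rw [h l (mem_erase.mp hl).1]

lemma defectPos_congr (h : ∀ l ≠ i, x l = y l) : defectPos k x i = defectPos k y i := by
  rw [defectPos, defectPos, lineLevel_congr h]

lemma exists_level_eq_lineLevel (h : lineLevel k x i ≠ ⊤) :
    ∃ j ≠ i, level k (x j) = lineLevel k x i := by
  obtain ⟨j, hj, hinf⟩ := exists_mem_eq_inf (univ.erase i)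
    (nonempty_iff_ne_empty.mpr fun he => h (by rw [lineLevel, he, inf_empty]))
    fun l => level k (x l)
  exact ⟨j, (mem_erase.mp hj).1, hinf.symm⟩

lemma eq_of_lineLevel_eq_top (h : lineLevel k x i = ⊤) (hl : l ≠ i) : x l = 2 * k + 2 :=
  level_eq_top_iff.mp (top_le_iff.mp (h ▸ lineLevel_le hl))

lemma pair_of_lineLevel_eq_coe {q : ℤ} (hx : LineMeetsCube k x i) (h : lineLevel k x i = q) :
    0 ≤ q ∧ q + 1 ≤ 4 * k + 2 ∧ level k q = q ∧ level k (q + 1) = q := by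
  obtain ⟨j, hji, hj⟩ := exists_level_eq_lineLevel (h ▸ WithTop.coe_ne_top)
  obtain ⟨h0, h1, -, h2, h3⟩ := pair_of_level_eq_coe (hx j hji).1 (hx j hji).2 (hj.trans h)
  exact ⟨h0, h1, h2, h3⟩

lemma defectPos_spec (hx : LineMeetsCube k x i) :
    0 ≤ defectPos k x i ∧ defectPos k x i + 1 ≤ 4 * k + 2 ∧
      level k (defectPos k x i + 1) = level k (defectPos k x i) := by
  cases h : lineLevel k x i with
  | top =>
    rw [defectPos, h, WithTop.untopD_top, level_two_mul, level_two_mul_add_one]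
    exact ⟨by omega, by omega, rfl⟩
  | coe q =>
    obtain ⟨h0, h1, h2, h3⟩ := pair_of_lineLevel_eq_coe hx h
    rw [defectPos, h, WithTop.untopD_coe, h2, h3]
    exact ⟨h0, h1, rfl⟩

lemma level_eq_lineLevel_of_eq_defectPos (hx : LineMeetsCube k x i)
    (hd : x i = defectPos k x i) (hq : lineLevel k x i ≠ ⊤) :
    level k (x i) = lineLevel k x i := by
  obtain ⟨q, h⟩ := WithTop.ne_top_iff_exists.mp hq
  rw [hd, defectPos, ← h, WithTop.untopD_coe, (pair_of_lineLevel_eq_coe hx h.symm).2.2.1]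

lemma level_apply_eq_of_eq_defectPos (hx : LineMeetsCube k x i) (hd : x i = defectPos k x i)
    (hv : IsEndpoint v (x, i)) (l : Fin n) : level k (v l) = level k (x l) := by
  obtain rfl | hl := eq_or_ne l i
  · rcases hv.apply_self with h | h
    · rw [h]
    · rw [h, hd, (defectPos_spec hx).2.2]
  · rw [hv.apply_of_ne hl]

def minSet (k : ℕ) (x : Fin n → ℤ) : Finset (Fin n) :=
  univ.filter fun l => ∀ m, level k (x l) ≤ level k (x m)

lemma minSet_congr (h : ∀ l, level k (x l) = level k (y l)) : minSet k x = minSet k y := by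
  simp only [minSet, h]

lemma level_eq_of_mem_minSet (hi : i ∈ minSet k x) (hj : j ∈ minSet k x) :
    level k (x i) = level k (x j) :=
  le_antisymm ((mem_filter.mp hi).2 j) ((mem_filter.mp hj).2 i)

lemma lineLevel_eq_of_mem_minSet (hi : i ∈ minSet k x) (hj : j ∈ minSet k x) (hji : j ≠ i) :
    lineLevel k x i = level k (x i) :=
  le_antisymm ((lineLevel_le hji).trans (level_eq_of_mem_minSet hi hj).ge)
    (le_lineLevel fun l _ => (mem_filter.mp hi).2 l)

lemma mem_minSet_of_eq_defectPos (hx : LineMeetsCube k x i) (hd : x i = defectPos k x i)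
    (hq : lineLevel k x i ≠ ⊤) : i ∈ minSet k x ∧ ∃ j ≠ i, j ∈ minSet k x := by
  have hi := level_eq_lineLevel_of_eq_defectPos hx hd hq
  have hmem : ∀ l, level k (x l) = lineLevel k x i → l ∈ minSet k x := fun l hl =>
    mem_filter.mpr ⟨mem_univ l, fun m => hl ▸ (eq_or_ne m i).elim (· ▸ hi.ge) lineLevel_le⟩
  obtain ⟨j, hji, hj⟩ := exists_level_eq_lineLevel hq
  exact ⟨hmem i hi, j, hji, hmem j hj⟩

noncomputable def host (k : ℕ) (x : Fin n → ℤ) (i : Fin n) : Fin n := cyclicPerm (minSet k x) i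

lemma host_mem_minSet (hx : LineMeetsCube k x i) (hd : x i = defectPos k x i)
    (hq : lineLevel k x i ≠ ⊤) : host k x i ∈ minSet k x :=
  cyclicPerm_mem (mem_minSet_of_eq_defectPos hx hd hq).1

lemma host_ne_self (hx : LineMeetsCube k x i) (hd : x i = defectPos k x i)
    (hq : lineLevel k x i ≠ ⊤) : host k x i ≠ i := by
  obtain ⟨hi, j, hji, hj⟩ := mem_minSet_of_eq_defectPos hx hd hq
  exact cyclicPerm_apply_ne hi hj hji.symm

/-- Parity of the ordinary edge from `t` to `t + 1` on a line with defect at `p`; it shifts by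
one past the defect, so that both end edges of the line get parity `0`. -/
def lineParity (p t : ℤ) : ZMod 2 := ((if t < p then t + 1 else t : ℤ) : ZMod 2)

lemma lineParity_ne_succ {p t : ℤ} (h : t + 1 ≠ p) : lineParity p t ≠ lineParity p (t + 1) := by
  unfold lineParity
  rw [Ne, ZMod.intCast_eq_intCast_iff_dvd_sub]
  split_ifs <;> omega

lemma lineParity_eq_of_isEndpoint {p s t : ℤ} (ht : t ≠ p) (hs : s = t ∨ s = t + 1)
    (hsp : s = p ∨ s = p + 1) : lineParity p t = s := by
  unfold lineParity
  congr 1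
  split_ifs <;> omega

noncomputable def defectColor (k : ℕ) (x : Fin n → ℤ) (i : Fin n) : Option (Fin n × ZMod 2) :=
  if lineLevel k x i = ⊤ then none else some (host k x i, ((x (host k x i) + 1 : ℤ) : ZMod 2))

noncomputable def edgeColor (k : ℕ) (e : GridEdge n) : Option (Fin n × ZMod 2) :=
  if e.1 e.2 = defectPos k e.1 e.2 then defectColor k e.1 e.2
  else some (e.2, lineParity (defectPos k e.1 e.2) (e.1 e.2))

lemma edgeColor_of_eq_defectPos (h : x i = defectPos k x i) :
    edgeColor k (x, i) = defectColor k x i :=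
  if_pos h

lemma edgeColor_of_ne_defectPos (h : x i ≠ defectPos k x i) :
    edgeColor k (x, i) = some (i, lineParity (defectPos k x i) (x i)) :=
  if_neg h

lemma defectColor_ne_some_self (hx : LineMeetsCube k x i) (hd : x i = defectPos k x i)
    (b : ZMod 2) : defectColor k x i ≠ some (i, b) := by
  unfold defectColor
  split_ifs with hq
  · exact (Option.some_ne_none _).symm
  · simp only [ne_eq, Option.some.injEq, Prod.mk.injEq, not_and]
    exact fun h => absurd h (host_ne_self hx hd hq)

lemma edgeColor_ne_rightEnd (hx : LineMeetsCube k x i) :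
    edgeColor k (x, i) ≠ edgeColor k (rightEnd (x, i), i) := by
  have hoff : ∀ l ≠ i, rightEnd (x, i) l = x l := fun l hl => rightEnd_apply_of_ne hl
  have hy : LineMeetsCube k (rightEnd (x, i)) i := fun l hl => hoff l hl ▸ hx l hl
  have hp : defectPos k (rightEnd (x, i)) i = defectPos k x i := defectPos_congr hoff
  have hyi := rightEnd_apply_self x i
  by_cases hd : x i = defectPos k x i
  · rw [edgeColor_of_eq_defectPos hd, edgeColor_of_ne_defectPos (by omega)]
    exact defectColor_ne_some_self hx hd _
  by_cases hd' : x i + 1 = defectPos k x i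
  · rw [edgeColor_of_ne_defectPos hd, edgeColor_of_eq_defectPos (by omega)]
    exact (defectColor_ne_some_self hy (by omega) _).symm
  · rw [edgeColor_of_ne_defectPos hd, edgeColor_of_ne_defectPos (by omega), hp, hyi]
    simpa using lineParity_ne_succ hd'

lemma edgeColor_ne_of_eq_defectPos_right (hij : i ≠ j) (hz : LineMeetsCube k z j)
    (hvx : IsEndpoint v (x, i)) (hvz : IsEndpoint v (z, j))
    (he : x i ≠ defectPos k x i) (hf : z j = defectPos k z j) :
    edgeColor k (x, i) ≠ edgeColor k (z, j) := by
  rw [edgeColor_of_ne_defectPos he, edgeColor_of_eq_defectPos hf, defectColor]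
  split_ifs with hq
  · exact Option.some_ne_none _
  simp only [ne_eq, Option.some.injEq, Prod.mk.injEq, not_and]
  intro hhost
  obtain ⟨q, hq'⟩ := WithTop.ne_top_iff_exists.mp hq
  -- `i` and `j` both have the minimal level `q` at `v`, so the `i`-line through `v` has its
  -- defect at `q` as well and `v` is one of its endpoints
  have hmin : minSet k v = minSet k z := minSet_congr (level_apply_eq_of_eq_defectPos hz hf hvz)
  have hi : i ∈ minSet k v := hmin ▸ hhost ▸ host_mem_minSet hz hf hq
  have hj : j ∈ minSet k v := hmin ▸ (mem_minSet_of_eq_defectPos hz hf hq).1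
  have hvi : v i = z i := hvz.apply_of_ne hij
  have hlev : level k (v i) = q := by
    rw [level_eq_of_mem_minSet hi hj, level_apply_eq_of_eq_defectPos hz hf hvz,
      level_eq_lineLevel_of_eq_defectPos hz hf hq, hq']
  have hpos : defectPos k x i = q := by
    rw [defectPos_congr fun l hl => (hvx.apply_of_ne hl).symm, defectPos,
      lineLevel_eq_of_mem_minSet hi hj hij.symm, hlev, WithTop.untopD_coe]
  obtain ⟨-, -, hvq, -⟩ := pair_of_level_eq_coe (hvi ▸ (hz i hij).1) (hvi ▸ (hz i hij).2) hlev
  rw [hpos] at he ⊢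
  rw [← hhost, lineParity_eq_of_isEndpoint he hvx.apply_self hvq, hvi,
    ZMod.intCast_eq_intCast_iff_dvd_sub]
  omega

lemma defectColor_ne_defectColor (hij : i ≠ j) (hx : LineMeetsCube k x i)
    (hz : LineMeetsCube k z j) (hvx : IsEndpoint v (x, i)) (hvz : IsEndpoint v (z, j))
    (he : x i = defectPos k x i) (hf : z j = defectPos k z j) :
    defectColor k x i ≠ defectColor k z j := by
  unfold defectColor
  split_ifs with hqx hqz hqz
  · have hvj : v j = 2 * k + 2 :=
      (hvx.apply_of_ne hij.symm).trans (eq_of_lineLevel_eq_top hqx hij.symm)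
    have hzj : z j = 2 * k := hf.trans (by rw [defectPos, hqz, WithTop.untopD_top])
    rcases hvz.apply_self with h | h <;> omega
  · exact (Option.some_ne_none _).symm
  · exact Option.some_ne_none _
  · simp only [ne_eq, Option.some.injEq, Prod.mk.injEq, not_and]
    intro hhost
    have hmx : minSet k x = minSet k v :=
      (minSet_congr (level_apply_eq_of_eq_defectPos hx he hvx)).symm
    have hmz : minSet k z = minSet k v :=
      (minSet_congr (level_apply_eq_of_eq_defectPos hz hf hvz)).symm
    rw [host, host, hmx, hmz] at hhost
    exact absurd ((cyclicPerm (minSet k v)).injective hhost) hij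

lemma edgeColor_ne_of_isEndpoint (hij : i ≠ j) (hx : LineMeetsCube k x i)
    (hz : LineMeetsCube k z j) (hvx : IsEndpoint v (x, i)) (hvz : IsEndpoint v (z, j)) :
    edgeColor k (x, i) ≠ edgeColor k (z, j) := by
  by_cases he : x i = defectPos k x i <;> by_cases hf : z j = defectPos k z j
  · rw [edgeColor_of_eq_defectPos he, edgeColor_of_eq_defectPos hf]
    exact defectColor_ne_defectColor hij hx hz hvx hvz he hf
  · exact (edgeColor_ne_of_eq_defectPos_right hij.symm hx hvz hvx hf he).symm
  · exact edgeColor_ne_of_eq_defectPos_right hij hz hvx hvz he hf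
  · rw [edgeColor_of_ne_defectPos he, edgeColor_of_ne_defectPos hf]
    simp [hij]

lemma edgeColor_ne_of_sharesVertex (hx : LineMeetsCube k x i) (hz : LineMeetsCube k z j)
    (hne : (x, i) ≠ (z, j)) (h : sharesVertex (x, i) (z, j)) :
    edgeColor k (x, i) ≠ edgeColor k (z, j) := by
  obtain rfl | hij := eq_or_ne i j
  · rcases eq_or_eq_rightEnd_of_sharesVertex h with rfl | rfl | rfl
    · exact absurd rfl hne
    · exact edgeColor_ne_rightEnd hx
    · exact (edgeColor_ne_rightEnd hz).symm
  · obtain ⟨v, hvx, hvz⟩ := sharesVertex_iff.mp h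
    exact edgeColor_ne_of_isEndpoint hij hx hz hvx hvz

lemma lineMeetsCube_of_edgeIn_or_edgeAdj
    (h : edgeIn 0 (fun _ => 4 * k + 2) (x, i) ∨ edgeAdj 0 (fun _ => 4 * k + 2) (x, i)) :
    LineMeetsCube k x i := fun l hl => by
  simpa using (edgeIn_or_edgeAdj_mk_iff.mp h).1 l hl

lemma edgeColor_of_edgeAdj (h : edgeAdj 0 (fun _ => 4 * k + 2) (x, i)) :
    edgeColor k (x, i) = some (i, 0) := by
  have hx := lineMeetsCube_of_edgeIn_or_edgeAdj (.inr h)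
  have hi : x i + 1 = 0 ∨ x i = 4 * k + 2 := by simpa using (edgeAdj_mk_iff.mp h).2
  obtain ⟨h0, h1, -⟩ := defectPos_spec hx
  have hpar : lineParity (defectPos k x i) (x i) = 0 := by
    rw [lineParity, ZMod.intCast_zmod_eq_zero_iff_dvd]
    split_ifs <;> omega
  rw [edgeColor_of_ne_defectPos (by omega), hpar]

lemma edgeIn_core_of_edgeColor_eq_none (h : edgeColor k (x, i) = none) :
    edgeIn (fun _ => (2 * k : ℤ)) (fun _ => 2) (x, i) := by
  by_cases hd : x i = defectPos k x i
  · rw [edgeColor_of_eq_defectPos hd, defectColor] at h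
    split_ifs at h with hq
    have hi : x i = 2 * k := hd.trans (by rw [defectPos, hq, WithTop.untopD_top])
    refine edgeIn_mk_iff.mpr ⟨fun l hl => ?_, by omega, by omega⟩
    have := eq_of_lineLevel_eq_top hq hl
    omega
  · rw [edgeColor_of_ne_defectPos hd] at h
    exact absurd h (Option.some_ne_none _)

def encodeColor : Option (Fin n × ZMod 2) → Fin (2 * n + 1)
  | none => Fin.last _
  | some (i, b) => ⟨2 * i + b.val, by have := i.isLt; have := ZMod.val_lt b; omega⟩

lemma encodeColor_injective : Function.Injective (encodeColor (n := n)) := by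
  rintro (_ | ⟨i, b⟩) (_ | ⟨j, c⟩) h <;>
    simp only [encodeColor, Fin.last, Fin.mk.injEq, Option.some.injEq, Prod.mk.injEq,
      reduceCtorEq] at h ⊢
  · have := j.isLt; have := ZMod.val_lt c; omega
  · have := i.isLt; have := ZMod.val_lt b; omega
  · have := ZMod.val_lt b; have := ZMod.val_lt c
    exact ⟨Fin.ext (by omega), ZMod.val_injective _ (by omega)⟩

end CubeCoreColoring

open CubeCoreColoring

/-- Let `d = 4k+2`. For the cube `R = [0,d]^n` there is a proper edge `(2n+1)`-coloring of
the edges in and adjacent to `R` such that (1) for each `i` all edges adjacent to `R`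
parallel to `e_i` have the same color `c_i`, and (2) the `(2n+1)`-st color is only used on
edges of the core `K = [d/2-1, d/2+1]^n = [2k, 2k+2]^n` of `R`. -/
theorem cube_core_coloring (n k : ℕ) :
    ∃ (c : GridEdge n → Fin (2 * n + 1)) (col : Fin n → Fin (2 * n + 1)),
      (∀ e f : GridEdge n,
        (edgeIn 0 (fun _ => 4 * k + 2) e ∨ edgeAdj 0 (fun _ => 4 * k + 2) e) →
        (edgeIn 0 (fun _ => 4 * k + 2) f ∨ edgeAdj 0 (fun _ => 4 * k + 2) f) →
        e ≠ f → sharesVertex e f → c e ≠ c f) ∧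
      (∀ e : GridEdge n, edgeAdj 0 (fun _ => 4 * k + 2) e → c e = col e.2) ∧
      (∀ e : GridEdge n,
        (edgeIn 0 (fun _ => 4 * k + 2) e ∨ edgeAdj 0 (fun _ => 4 * k + 2) e) →
        c e = ⟨2 * n, by omega⟩ →
        edgeIn (fun _ => (2 * k : ℤ)) (fun _ => 2) e) := by
  refine ⟨fun e => encodeColor (edgeColor k e), fun i => encodeColor (some (i, 0)), ?_, ?_, ?_⟩
  · rintro ⟨x, i⟩ ⟨z, j⟩ he hf hne h
    exact encodeColor_injective.ne <| edgeColor_ne_of_sharesVertex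
      (lineMeetsCube_of_edgeIn_or_edgeAdj he) (lineMeetsCube_of_edgeIn_or_edgeAdj hf) hne h
  · rintro ⟨x, i⟩ h
    exact congrArg encodeColor (edgeColor_of_edgeAdj h)
  · rintro ⟨x, i⟩ - h
    exact edgeIn_core_of_edgeColor_eq_none (encodeColor_injective (h.trans rfl))
end

section
/- Suppose a grid rectangle R in ℤ^n is divided into layers perpendicular to e_n, each layer colored identically by a proper edge (2n-1)-coloring satisfying the boundary condition, with colors among {c_1,...,c_{n-1},1,...,n}. Then for every vertex x in R, the set C_x of colors used on already-colored edges incident with x has cardinality 2n-2, and C_x = C_y whenever y = x + e_n is also in R; in particular some color c* ∈ {c_1,...,c_{n-1},1,...,n} is missing at both endpoints of each edge parallel to e_n inside R. -/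
/-- The set `C_x` of colors used on the already-colored (layer) edges incident with `x`:
the edges `(x, i)` and `(x - e_i, i)` for directions `i ≠ lastI`. -/
def colorsAt {n : ℕ} (c : GridEdge n → Fin (2 * n - 1)) (lastI : Fin n)
    (x : Fin n → ℤ) : Finset (Fin (2 * n - 1)) :=
  ((Finset.univ.filter (fun i : Fin n => i ≠ lastI)).image fun i => c (x, i)) ∪
  ((Finset.univ.filter (fun i : Fin n => i ≠ lastI)).image fun i => c (x - Pi.single i 1, i))

/-- Suppose the rectangle `R = [0,a_1] × ⋯ × [0,a_n]` is divided into layers perpendicular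
to `e_n` (direction `lastI`), each layer colored identically by a proper edge
`(2n-1)`-coloring satisfying the boundary condition. Then for every vertex `x ∈ R` the set
`C_x` of colors on already-colored edges incident with `x` has cardinality `2n-2`, and
`C_x = C_y` whenever `y = x + e_n ∈ R`; in particular some color is missing at both
endpoints of each edge of `R` parallel to `e_n`. -/
theorem layer_missing_color (n : ℕ) (hn : 2 ≤ n) (a : Fin n → ℕ) (ha : ∀ i, 1 ≤ a i)
    (lastI : Fin n) (hlast : (lastI : ℕ) = n - 1)
    (c : GridEdge n → Fin (2 * n - 1)) (col : Fin n → Fin (2 * n - 1))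
    -- the layers are colored identically
    (hident : ∀ (x : Fin n → ℤ) (i : Fin n), i ≠ lastI →
      c (x + Pi.single lastI 1, i) = c (x, i))
    -- each layer's coloring is proper on the edges in or adjacent to the layer
    (hproper : ∀ e f : GridEdge n, e.2 ≠ lastI → f.2 ≠ lastI →
      (edgeIn 0 a e ∨ edgeAdj 0 a e) → (edgeIn 0 a f ∨ edgeAdj 0 a f) →
      e ≠ f → sharesVertex e f → c e ≠ c f)
    -- boundary condition: edges adjacent to a layer and parallel to `e_i` get color `c_i`
    (hbd : ∀ e : GridEdge n, e.2 ≠ lastI → edgeAdj 0 a e → c e = col e.2) :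
    ∀ x : Fin n → ℤ, inRect 0 a x →
      (colorsAt c lastI x).card = 2 * n - 2 ∧
      (inRect 0 a (x + Pi.single lastI 1) →
        colorsAt c lastI x = colorsAt c lastI (x + Pi.single lastI 1)) ∧
      (inRect 0 a (x + Pi.single lastI 1) →
        ∃ cstar : Fin (2 * n - 1), cstar ∉ colorsAt c lastI x ∧
          cstar ∉ colorsAt c lastI (x + Pi.single lastI 1)) := by
  intro x hx
  -- any edge with an endpoint in R is in or adjacent to R
  have hEok : ∀ (e : GridEdge n), (inRect 0 a e.1 ∨ inRect 0 a (rightEnd e)) →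
      edgeIn 0 a e ∨ edgeAdj 0 a e := by
    intro e h
    by_cases he : edgeIn 0 a e
    · exact Or.inl he
    · exact Or.inr ⟨he, h⟩
  have hre : ∀ i : Fin n, rightEnd ((x - Pi.single i 1, i) : GridEdge n) = x := by
    intro i; simp [rightEnd]
  have hE1 : ∀ i : Fin n, edgeIn 0 a ((x, i) : GridEdge n) ∨ edgeAdj 0 a ((x, i) : GridEdge n) :=
    fun i => hEok _ (Or.inl hx)
  have hE2 : ∀ i : Fin n, edgeIn 0 a ((x - Pi.single i 1, i) : GridEdge n) ∨
      edgeAdj 0 a ((x - Pi.single i 1, i) : GridEdge n) :=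
    fun i => hEok _ (Or.inr (by rw [hre]; exact hx))
  have hxne : ∀ (y : Fin n → ℤ) (j : Fin n), y ≠ y - Pi.single j 1 := by
    intro y j h
    have := congrFun h j
    simp [Pi.single_eq_same] at this
    omega
  -- the three pairwise-distinctness facts
  have h11 : ∀ i j : Fin n, i ≠ lastI → j ≠ lastI → i ≠ j →
      c (x, i) ≠ c (x, j) := by
    intro i j hi hj hij
    refine hproper _ _ hi hj (hE1 i) (hE1 j) (by simp [Prod.ext_iff, hij]) (Or.inl rfl)
  have h22 : ∀ i j : Fin n, i ≠ lastI → j ≠ lastI → i ≠ j →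
      c (x - Pi.single i 1, i) ≠ c (x - Pi.single j 1, j) := by
    intro i j hi hj hij
    refine hproper _ _ hi hj (hE2 i) (hE2 j) (by simp [Prod.ext_iff, hij])
      (Or.inr (Or.inr (Or.inr (by rw [hre, hre]))))
  have h12 : ∀ i j : Fin n, i ≠ lastI → j ≠ lastI →
      c (x, i) ≠ c (x - Pi.single j 1, j) := by
    intro i j hi hj
    refine hproper _ _ hi hj (hE1 i) (hE2 j) ?_ (Or.inr (Or.inl (hre j).symm))
    · simp only [ne_eq, Prod.mk.injEq, not_and]
      intro h; exact absurd h (hxne x j)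
  set s : Finset (Fin n) := Finset.univ.filter (fun i : Fin n => i ≠ lastI) with hs
  have hscard : s.card = n - 1 := by
    have : s = Finset.univ.erase lastI := by
      ext i; simp [hs, Finset.mem_erase, and_comm]
    rw [this, Finset.card_erase_of_mem (Finset.mem_univ _), Finset.card_univ, Fintype.card_fin]
  have hmem : ∀ i ∈ s, i ≠ lastI := by intro i hi; simpa [hs] using hi
  have hinj1 : Set.InjOn (fun i => c (x, i)) s := by
    intro i hi j hj h
    by_contra hij
    exact h11 i j (hmem i hi) (hmem j hj) hij h
  have hinj2 : Set.InjOn (fun i => c (x - Pi.single i 1, i)) s := by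
    intro i hi j hj h
    by_contra hij
    exact h22 i j (hmem i hi) (hmem j hj) hij h
  have hdisj : Disjoint (s.image fun i => c (x, i))
      (s.image fun i => c (x - Pi.single i 1, i)) := by
    rw [Finset.disjoint_left]
    intro b hb hb'
    obtain ⟨i, hi, hib⟩ := Finset.mem_image.mp hb
    obtain ⟨j, hj, hjb⟩ := Finset.mem_image.mp hb'
    exact h12 i j (hmem i hi) (hmem j hj) (hib.trans hjb.symm)
  have hcard : (colorsAt c lastI x).card = 2 * n - 2 := by
    rw [colorsAt, ← hs, Finset.card_union_of_disjoint hdisj,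
      Finset.card_image_of_injOn hinj1, Finset.card_image_of_injOn hinj2, hscard]
    omega
  refine ⟨hcard, ?_, ?_⟩
  · intro _
    have him1 : (s.image fun i => c (x + Pi.single lastI 1, i)) =
        s.image fun i => c (x, i) :=
      Finset.image_congr (fun i hi => hident x i (hmem i hi))
    have him2 : (s.image fun i => c (x + Pi.single lastI 1 - Pi.single i 1, i)) =
        s.image fun i => c (x - Pi.single i 1, i) := by
      refine Finset.image_congr (fun i hi => ?_)
      have : x + Pi.single lastI 1 - Pi.single i 1 = (x - Pi.single i 1) + Pi.single lastI 1 := by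
        abel
      rw [this]
      exact hident _ i (hmem i hi)
    rw [colorsAt, colorsAt, ← hs, him1, him2]
  · intro hy
    have heq : colorsAt c lastI x = colorsAt c lastI (x + Pi.single lastI 1) := by
      have him1 : (s.image fun i => c (x + Pi.single lastI 1, i)) =
          s.image fun i => c (x, i) :=
        Finset.image_congr (fun i hi => hident x i (hmem i hi))
      have him2 : (s.image fun i => c (x + Pi.single lastI 1 - Pi.single i 1, i)) =
          s.image fun i => c (x - Pi.single i 1, i) := by
        refine Finset.image_congr (fun i hi => ?_)
        have : x + Pi.single lastI 1 - Pi.single i 1 = (x - Pi.single i 1) + Pi.single lastI 1 := by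
          abel
        rw [this]
        exact hident _ i (hmem i hi)
      rw [colorsAt, colorsAt, ← hs, him1, him2]
    have hne : colorsAt c lastI x ≠ Finset.univ := by
      intro h
      rw [h, Finset.card_univ, Fintype.card_fin] at hcard
      omega
    have : ¬ ∀ b, b ∈ colorsAt c lastI x := fun h => hne (Finset.eq_univ_iff_forall.mpr h)
    push_neg at this
    obtain ⟨cstar, hcstar⟩ := this
    exact ⟨cstar, hcstar, heq ▸ hcstar⟩
end
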